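/- arXiv:2403.00500 — 8 statements merged into one kernel-verified Lean document; each statement's English description precedes it below -/
import Mathlib

section
/- Let β be an algebraic integer of degree n ≥ 5 over ℚ with conjugates β_1, …, β_n, and suppose Gal(ℚ(β_1,…,β_n)/ℚ) = 𝔄_n. Let a_1, …, a_n ∈ ℤ and set α = a_1β_1 + ⋯ + a_nβ_n. Then α generates ℚ(β_1,…,β_n) over ℚ (i.e., ℚ(α) = ℚ(β_1,…,β_n)) if and only if there are at most two distinct indices i, j with a_i = a_j (equivalently, the values a_1,…,a_n take at least n−1 distinct values). -/
/-
Automorphisms of `ℂ` permute the conjugates `Bᵢ`, and the permutations obtained are exactly the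
even ones.

If the `aᵢ` take at most `n - 2` values, then a 3-cycle or a double transposition `τ` preserves
`a`; the automorphism realising `τ` fixes `α` but moves some `Bᵢ`, so `ℚ(α) ≠ K`.

Conversely, an automorphism of `K` fixing `α`, extended to `ℂ`, induces an even `τ` with
`∑ (a (τ⁻¹ i) - a i) Bᵢ = 0`, an integer relation whose coefficients sum to zero. Applying a
3-cycle to a relation produces one supported on three roots, and applying double transpositions
to that one (here `n ≥ 5` is used) forces all coefficients of the original relation to be equal,
hence zero. So `τ` preserves `a`, and an even permutation preserving a function with at least
`n - 1` values is trivial. By Galois theory, `ℚ(α) = K`.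
-/

open Polynomial

/-- The image of the permutation representation of the Galois group of the splitting
field on the roots `B 0, …, B (n-1)`. -/
def galoisImage (n : ℕ) (B : Fin n → ℂ) : Set (Equiv.Perm (Fin n)) :=
  {τ | ∃ σ : ℂ ≃ₐ[ℚ] ℂ, ∀ i, σ (B i) = B (τ i)}

open Equiv Finset Function IntermediateField

theorem IsAlgClosed.exists_ringEquiv_extend (F C : Type*) [Field F] [Field C] [IsAlgClosed C]
    [Algebra F C] (σ : F ≃+* F) :
    ∃ T : C ≃+* C, ∀ x : F, T (algebraMap F C x) = algebraMap F C (σ x) := by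
  -- `C` is an algebraic closure of the polynomial ring `E` on a transcendence basis: extend `σ`
  -- to `E` coefficientwise, then to `C`.
  obtain ⟨s, hs⟩ := exists_isTranscendenceBasis F C
  let E := Algebra.adjoin F (Set.range ((↑) : s → C))
  let : IsAlgClosure E C := IsAlgClosed.isAlgClosure_of_transcendence_basis _ hs
  let e : E ≃+* E := (hs.1.aevalEquiv.symm.toRingEquiv.trans (MvPolynomial.mapEquiv s σ)).trans
    hs.1.aevalEquiv.toRingEquiv
  have he : ∀ x : F, e (algebraMap F E x) = algebraMap F E (σ x) := fun x => by
    have hC : ∀ y : F, algebraMap F E y = hs.1.aevalEquiv (MvPolynomial.C y) := fun y =>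
      (hs.1.aevalEquiv.commutes y).symm
    simp [e, hC]
  refine ⟨IsAlgClosure.equivOfEquiv C C e, fun x => ?_⟩
  rw [IsScalarTower.algebraMap_apply F E C, IsAlgClosure.equivOfEquiv_algebraMap, he,
    ← IsScalarTower.algebraMap_apply]

theorem IntermediateField.exists_algEquiv_extend {k C : Type*} [Field k] [Field C] [IsAlgClosed C]
    [Algebra k C] (K : IntermediateField k C) (σ : K ≃ₐ[k] K) :
    ∃ T : C ≃ₐ[k] C, ∀ x : K, T x = σ x := by
  obtain ⟨T, hT⟩ := IsAlgClosed.exists_ringEquiv_extend K C σ.toRingEquiv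
  refine ⟨AlgEquiv.ofRingEquiv (f := T) fun r => ?_, hT⟩
  simpa using hT (algebraMap k K r)

theorem IntermediateField.adjoin_simple_eq_top_of_forall_algEquiv {F E : Type*} [Field F]
    [Field E] [Algebra F E] [FiniteDimensional F E] [IsGalois F E] {x : E}
    (h : ∀ σ : E ≃ₐ[F] E, σ x = x → σ = 1) : F⟮x⟯ = ⊤ := by
  have hfix : F⟮x⟯.fixingSubgroup = ⊥ := (Subgroup.eq_bot_iff_forall _).mpr fun σ hσ =>
    h σ ((mem_fixingSubgroup_iff _ σ).mp hσ x (mem_adjoin_simple_self F x))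
  rw [← IsGalois.fixedField_fixingSubgroup F⟮x⟯, hfix, fixedField_bot]

section Roots

variable {F L ι : Type*} [Field F] [Field L] [Algebra F L] [Fintype ι] {p : F[X]} {B : ι → L}

theorem injective_of_aroots_eq (hp : p.Separable) (hroots : p.aroots L = univ.val.map B) :
    Injective B := by
  have hnodup : (univ.val.map B).Nodup := hroots ▸ nodup_roots hp.map
  exact fun i j hij => Multiset.inj_on_of_nodup_map hnodup i (mem_univ i) j (mem_univ j) hij

theorem exists_perm_apply_eq_of_aroots_eq (hroots : p.aroots L = univ.val.map B)
    (hB : Injective B) (σ : L ≃ₐ[F] L) : ∃ τ : Perm ι, ∀ i, σ (B i) = B (τ i) := by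
  have hmaps : ∀ i, ∃ j, σ (B i) = B j := fun i => by
    have hBi : B i ∈ p.aroots L := hroots ▸ Multiset.mem_map_of_mem B (mem_univ i)
    have hσBi : σ (B i) ∈ p.aroots L := by
      rw [mem_aroots] at hBi ⊢
      exact ⟨hBi.1, by rw [aeval_algHom_apply, hBi.2, map_zero]⟩
    obtain ⟨j, -, hj⟩ := Multiset.mem_map.mp (hroots ▸ hσBi)
    exact ⟨j, hj.symm⟩
  choose f hf using hmaps
  have hf_inj : Injective f := fun i j hij => hB (σ.injective (by rw [hf, hf, hij]))
  exact ⟨Equiv.ofBijective f hf_inj.bijective_of_finite, hf⟩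

theorem isSplittingField_adjoin_range [IsAlgClosed L] (hroots : p.aroots L = univ.val.map B) :
    p.IsSplittingField F (adjoin F (Set.range B)) := by
  have hrootSet : p.rootSet L = Set.range B := by
    ext x
    simp [rootSet, hroots]
  exact hrootSet ▸ adjoin_rootSet_isSplittingField (IsAlgClosed.splits _)

end Roots

section Combinatorics

variable {α β : Type*} [DecidableEq α] {f : α → β}

theorem apply_swap_apply_of_apply_eq {u v : α} (h : f u = f v) (x : α) :
    f (swap u v x) = f x := by
  rw [swap_apply_def]
  split_ifs with hu hv <;> simp_all

variable [Fintype α]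

theorem eq_one_of_injOn_compl_singleton {j : α} (hf : Set.InjOn f {j}ᶜ) {τ : Perm α}
    (hτ : τ ∈ alternatingGroup α) (hfτ : ∀ x, f (τ x) = f x) : τ = 1 := by
  have hsupp : τ.support ⊆ {j, τ⁻¹ j} := by
    intro x hx
    by_contra hxj
    simp only [mem_insert, mem_singleton, not_or] at hxj
    have hτx : τ x ≠ j := fun h => hxj.2 (by simp [← h])
    exact Perm.mem_support.mp hx (hf hτx hxj.1 (hfτ x))
  by_contra hne
  have htwo : #τ.support = 2 :=
    le_antisymm ((card_le_card hsupp).trans (card_insert_le _ _))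
      (Perm.two_le_card_support_of_ne_one hne)
  have hsign := (Perm.card_support_eq_two.mp htwo).sign_eq
  rw [Perm.mem_alternatingGroup.mp hτ] at hsign
  exact absurd hsign (by decide)

theorem injOn_compl_singleton_of_card_sub_one_le [DecidableEq β]
    (h : Fintype.card α - 1 ≤ #(univ.image f)) {i j : α} (hij : i ≠ j) (hfij : f i = f j) :
    Set.InjOn f {j}ᶜ := by
  have himage : univ.image f = (univ.erase j).image f := by
    refine le_antisymm (fun y hy => ?_) (image_subset_image (erase_subset _ _))
    obtain ⟨x, -, rfl⟩ := mem_image.mp hy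
    by_cases hxj : x = j
    · exact mem_image.mpr ⟨i, mem_erase.mpr ⟨hij, mem_univ _⟩, hxj ▸ hfij⟩
    · exact mem_image_of_mem f (mem_erase.mpr ⟨hxj, mem_univ _⟩)
  have hcard : #((univ.erase j).image f) = #(univ.erase j) := by
    refine le_antisymm card_image_le ?_
    rw [card_erase_of_mem (mem_univ _), card_univ, ← himage]
    exact h
  simpa [Set.compl_eq_univ_sdiff] using card_image_iff.mp hcard

theorem card_sub_one_le_card_image_iff [DecidableEq β] :
    Fintype.card α - 1 ≤ #(univ.image f) ↔
      ∀ τ ∈ alternatingGroup α, (∀ x, f (τ x) = f x) → τ = 1 := by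
  constructor
  · intro h τ hτ hfτ
    by_cases hinj : Injective f
    · exact Perm.ext fun x => hinj (hfτ x)
    obtain ⟨i, j, hfij, hij⟩ := not_injective_iff.mp hinj
    exact eq_one_of_injOn_compl_singleton
      (injOn_compl_singleton_of_card_sub_one_le h hij hfij) hτ hfτ
  · contrapose!
    intro h
    have hinj : ¬ Injective f := fun hinj => by
      rw [card_image_of_injective _ hinj, card_univ] at h
      omega
    obtain ⟨i, j, hfij, hij⟩ := not_injective_iff.mp hinj
    have hnot : ¬ Set.InjOn f {j}ᶜ := fun hinjOn => by
      have himage := card_image_of_injOn (s := univ.erase j)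
        (by simpa [Set.compl_eq_univ_sdiff] using hinjOn)
      have hle := card_le_card (image_subset_image (f := f) (subset_univ (univ.erase j)))
      rw [card_erase_of_mem (mem_univ _), card_univ] at himage
      omega
    simp only [Set.InjOn, not_forall] at hnot
    obtain ⟨k, hk, l, hl, hfkl, hkl⟩ := hnot
    refine ⟨swap i j * swap k l, ?_, fun x => ?_, fun h1 => ?_⟩
    · simp [Perm.mem_alternatingGroup, Perm.sign_swap hij, Perm.sign_swap hkl]
    · rw [Perm.mul_apply, apply_swap_apply_of_apply_eq hfij, apply_swap_apply_of_apply_eq hfkl]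
    · have hl' := congrArg (· l) h1
      simp only [Perm.mul_apply, swap_apply_right, Perm.one_apply] at hl'
      rw [swap_apply_def] at hl'
      split_ifs at hl' <;> simp_all

end Combinatorics

section IntegerRelations

variable {L ι : Type*} [Field L] [Fintype ι] [DecidableEq ι] {B : ι → L}

theorem exists_pair_notMem_of_five_le_card (h5 : 5 ≤ Fintype.card ι) (p q r : ι) :
    ∃ s t, s ≠ t ∧ s ∉ ({p, q, r} : Finset ι) ∧ t ∉ ({p, q, r} : Finset ι) := by
  have hlt : 1 < #({p, q, r} : Finset ι)ᶜ := by
    rw [card_compl]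
    have := card_le_three (a := p) (b := q) (c := r)
    omega
  obtain ⟨s, hs, t, ht, hst⟩ := one_lt_card.mp hlt
  exact ⟨s, t, hst, mem_compl.mp hs, mem_compl.mp ht⟩

variable (hA : ∀ ρ ∈ alternatingGroup ι, ∃ σ : L ≃+* L, ∀ i, σ (B i) = B (ρ i))
include hA

theorem three_cycle_relation {c : ι → ℤ} (hc : ∑ i, (c i : L) * B i = 0) {p q r : ι}
    (hpq : p ≠ q) (hpr : p ≠ r) (hqr : q ≠ r) :
    ((c r - c p : ℤ) : L) * B p + ((c p - c q : ℤ) : L) * B q + ((c q - c r : ℤ) : L) * B r =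
      0 := by
  set ρ := swap p q * swap q r
  obtain ⟨σ, hσ⟩ := hA ρ
    (by simp [ρ, Perm.mem_alternatingGroup, Perm.sign_swap hpq, Perm.sign_swap hqr])
  have hmoved : ∑ i, (c i : L) * (B (ρ i) - B i) = 0 := by
    have := congrArg σ hc
    simp only [map_sum, map_mul, map_intCast, hσ, map_zero] at this
    simp [mul_sub, sum_sub_distrib, this, hc]
  rw [← sum_subset (subset_univ {p, q, r})] at hmoved
  · simp [ρ, hpq, hpr, hqr, swap_apply_of_ne_of_ne, hpr.symm, hqr.symm] at hmoved
    push_cast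
    linear_combination hmoved
  · intro x _ hx
    simp only [mem_insert, mem_singleton, not_or] at hx
    simp [ρ, swap_apply_of_ne_of_ne, hx.1, hx.2.1, hx.2.2]

variable [CharZero L] (hB : Injective B)
include hB

theorem coeff_eq_of_three_term_relation {p q r s t : ι}
    (hpq : p ≠ q) (hpr : p ≠ r) (hqr : q ≠ r)
    (hst : s ≠ t) (hs : s ∉ ({p, q, r} : Finset ι)) (ht : t ∉ ({p, q, r} : Finset ι))
    {x y z : ℤ} (h : (x : L) * B p + y * B q + z * B r = 0) : y = z := by
  simp only [mem_insert, mem_singleton, not_or] at hs ht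
  obtain ⟨σ, hσ⟩ := hA (swap q r * swap s t)
    (by simp [Perm.mem_alternatingGroup, Perm.sign_swap hqr, Perm.sign_swap hst])
  have hswapped : (x : L) * B p + y * B r + z * B q = 0 := by
    have := congrArg σ h
    simpa [hσ, swap_apply_of_ne_of_ne, hpq, hpr, hqr, hst, hs, ht, Ne.symm hs.1, Ne.symm hs.2.1,
      Ne.symm hs.2.2, Ne.symm ht.1, Ne.symm ht.2.1, Ne.symm ht.2.2] using this
  have hprod : ((y : L) - z) * (B q - B r) = 0 := by linear_combination h - hswapped
  have hBqr : B q - B r ≠ 0 := sub_ne_zero.mpr (hB.ne hqr)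
  exact_mod_cast sub_eq_zero.mp ((mul_eq_zero.mp hprod).resolve_right hBqr)

theorem eq_of_sum_intCast_mul_eq_zero (h5 : 5 ≤ Fintype.card ι) {c : ι → ℤ}
    (hc : ∑ i, (c i : L) * B i = 0) (p q : ι) : c p = c q := by
  rcases eq_or_ne p q with rfl | hpq
  · rfl
  obtain ⟨r, -, -, hr, -⟩ := exists_pair_notMem_of_five_le_card h5 p q q
  simp only [mem_insert, mem_singleton, not_or] at hr
  have hrel := three_cycle_relation hA hc hpq (Ne.symm hr.1) (Ne.symm hr.2.1)
  obtain ⟨s, t, hst, hs, ht⟩ := exists_pair_notMem_of_five_le_card h5 p q r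
  have hqr := coeff_eq_of_three_term_relation hA hB hpq (Ne.symm hr.1) (Ne.symm hr.2.1)
    hst hs ht hrel
  have hrp := coeff_eq_of_three_term_relation hA hB hr.1 hr.2.1 hpq hst
    (by simp_all) (by simp_all) (x := c q - c r) (y := c r - c p) (z := c p - c q)
    (by linear_combination hrel)
  omega

theorem apply_perm_eq_of_sum_intCast_mul_perm_eq (h5 : 5 ≤ Fintype.card ι) {a : ι → ℤ}
    {τ : Perm ι} (h : ∑ i, (a i : L) * B (τ i) = ∑ i, (a i : L) * B i) (i : ι) :
    a (τ i) = a i := by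
  set c : ι → ℤ := fun j => a (τ.symm j) - a j
  have hreindex : ∑ i, (a i : L) * B (τ i) = ∑ j, (a (τ.symm j) : L) * B j := by
    simpa using Equiv.sum_comp τ fun j => (a (τ.symm j) : L) * B j
  have hc : ∑ j, (c j : L) * B j = 0 := by
    simp [c, sub_mul, sum_sub_distrib, ← hreindex, h]
  have hconst : ∑ j, c j = Fintype.card ι * c (τ i) := by
    rw [sum_congr rfl fun j _ => eq_of_sum_intCast_mul_eq_zero hA hB h5 hc j (τ i), sum_const,
      card_univ, nsmul_eq_mul]
  have hsum : ∑ j, c j = 0 := by simp [c, sum_sub_distrib, Equiv.sum_comp τ.symm a]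
  have : c (τ i) = 0 := by
    rw [hsum] at hconst
    exact (mul_eq_zero.mp hconst.symm).resolve_left (by omega)
  simp only [c, symm_apply_apply, sub_eq_zero] at this
  exact this.symm

end IntegerRelations

theorem map_sum_intCast_mul_of_apply_eq {L ι : Type*} [Field L] [Fintype ι] {B : ι → L}
    {σ : L ≃+* L} {τ : Perm ι} (hσ : ∀ i, σ (B i) = B (τ i)) (a : ι → ℤ) :
    σ (∑ i, (a i : L) * B i) = ∑ i, (a i : L) * B (τ i) := by
  simp only [map_sum, map_mul, map_intCast, hσ]

section Generation

variable {F L ι : Type*} [Field F] [Field L] [Algebra F L] [Fintype ι] [DecidableEq ι]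
  {B : ι → L}
  (hgal : {τ : Perm ι | ∃ σ : L ≃ₐ[F] L, ∀ i, σ (B i) = B (τ i)} = alternatingGroup ι)
include hgal

theorem exists_algEquiv_of_mem_alternatingGroup {τ : Perm ι} (hτ : τ ∈ alternatingGroup ι) :
    ∃ σ : L ≃ₐ[F] L, ∀ i, σ (B i) = B (τ i) := by
  rwa [← SetLike.mem_coe, ← hgal] at hτ

theorem card_sub_one_le_card_image_of_adjoin_eq (hB : Injective B) (a : ι → ℤ)
    (h : F⟮∑ i, (a i : L) * B i⟯ = adjoin F (Set.range B)) :
    Fintype.card ι - 1 ≤ #(univ.image a) := by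
  refine card_sub_one_le_card_image_iff.mpr fun τ hτ haτ => Perm.ext fun i => hB ?_
  obtain ⟨σ, hσ⟩ := exists_algEquiv_of_mem_alternatingGroup hgal hτ
  have hσα : σ (∑ i, (a i : L) * B i) = ∑ i, (a i : L) * B i := by
    rw [← AlgEquiv.coe_ringEquiv, map_sum_intCast_mul_of_apply_eq hσ]
    simpa [haτ] using Equiv.sum_comp τ fun i => (a i : L) * B i
  have hfix :=
    (forall_mem_adjoin_smul_eq_self_iff F (S := {∑ i, (a i : L) * B i}) σ).mpr fun x hx => by
      rw [Set.mem_singleton_iff.mp hx, AlgEquiv.smul_def, hσα]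
  simpa [AlgEquiv.smul_def, hσ] using hfix (B i) (h ▸ subset_adjoin F _ ⟨i, rfl⟩)

theorem adjoin_simple_eq_adjoin_range_of_card_sub_one_le [IsAlgClosed L] [CharZero L]
    {p : F[X]} (hp : p.Separable) (hroots : p.aroots L = univ.val.map B)
    (h5 : 5 ≤ Fintype.card ι) (a : ι → ℤ)
    (hcard : Fintype.card ι - 1 ≤ #(univ.image a)) :
    F⟮∑ i, (a i : L) * B i⟯ = adjoin F (Set.range B) := by
  set K := adjoin F (Set.range B)
  have : p.IsSplittingField F K := isSplittingField_adjoin_range hroots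
  have : IsGalois F K := IsGalois.of_separable_splitting_field hp
  have : FiniteDimensional F K := IsSplittingField.finiteDimensional K p
  have hB := injective_of_aroots_eq hp hroots
  have hA : ∀ ρ ∈ alternatingGroup ι, ∃ σ : L ≃+* L, ∀ i, σ (B i) = B (ρ i) :=
    fun ρ hρ =>
      (exists_algEquiv_of_mem_alternatingGroup hgal hρ).elim fun σ hσ => ⟨σ, hσ⟩
  have hαK : ∑ i, (a i : L) * B i ∈ K :=
    sum_mem fun i _ => mul_mem (intCast_mem K _) (subset_adjoin F _ ⟨i, rfl⟩)
  suffices F⟮(⟨_, hαK⟩ : K)⟯ = ⊤ by simpa [lift_adjoin_simple] using congrArg lift this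
  refine adjoin_simple_eq_top_of_forall_algEquiv fun σK hσK => ?_
  obtain ⟨σ, hσ⟩ := K.exists_algEquiv_extend σK
  obtain ⟨τ, hστ⟩ := exists_perm_apply_eq_of_aroots_eq hroots hB σ
  have hτ : τ ∈ alternatingGroup ι := by
    rw [← SetLike.mem_coe, ← hgal]
    exact ⟨σ, hστ⟩
  have hσα : σ (∑ i, (a i : L) * B i) = ∑ i, (a i : L) * B i := by
    simpa [hσK] using hσ ⟨_, hαK⟩
  have haτ := apply_perm_eq_of_sum_intCast_mul_perm_eq hA hB h5
    (by rwa [← AlgEquiv.coe_ringEquiv, map_sum_intCast_mul_of_apply_eq hστ] at hσα)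
  have hτ1 : τ = 1 := card_sub_one_le_card_image_iff.mp hcard τ hτ haτ
  have hfix := (forall_mem_adjoin_smul_eq_self_iff F (S := Set.range B) σ).mpr
    (by rintro _ ⟨i, rfl⟩; simp [hστ, hτ1])
  exact AlgEquiv.ext fun x => Subtype.ext (by simpa [hσ] using hfix x x.2)

end Generation

theorem stmt_3_general (n : ℕ) (hn : 5 ≤ n) (b : ℂ) (B : Fin n → ℂ)
    (hbint : IsIntegral ℤ b)
    (hroots : (minpoly ℚ b).aroots ℂ = Multiset.map B Finset.univ.val)
    (hgal : galoisImage n B = (alternatingGroup (Fin n) : Set (Equiv.Perm (Fin n))))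
    (a : Fin n → ℤ) (α : ℂ) (hα : α = ∑ i, (a i : ℂ) * B i) :
    IntermediateField.adjoin ℚ {α} = IntermediateField.adjoin ℚ (Set.range B) ↔
      n - 1 ≤ (Finset.univ.image a).card := by
  have hsep : (minpoly ℚ b).Separable := (minpoly.irreducible hbint.tower_top).separable
  subst hα
  have h := Iff.intro
    (card_sub_one_le_card_image_of_adjoin_eq hgal (injective_of_aroots_eq hsep hroots) a)
    (adjoin_simple_eq_adjoin_range_of_card_sub_one_le hgal hsep hroots (by simpa using hn) a)
  rwa [Fintype.card_fin] at h

/-- Let `β` be an algebraic integer of degree `n ≥ 5` with conjugates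
`B 0, …, B (n-1)` and Galois group of the splitting field equal to `𝔄ₙ`.  Then
`α = ∑ aᵢ Bᵢ` generates `ℚ(B₀,…,Bₙ₋₁)` over `ℚ` iff the `aᵢ` take at least `n-1`
distinct values. -/
theorem stmt_3 (n : ℕ) (hn : 5 ≤ n) (b : ℂ) (B : Fin n → ℂ)
    (hbint : IsIntegral ℤ b)
    (hdeg : (minpoly ℚ b).natDegree = n)
    (hroots : (minpoly ℚ b).aroots ℂ = Multiset.map B Finset.univ.val)
    (hgal : galoisImage n B = (alternatingGroup (Fin n) : Set (Equiv.Perm (Fin n))))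
    (a : Fin n → ℤ) (α : ℂ) (hα : α = ∑ i, (a i : ℂ) * B i) :
    IntermediateField.adjoin ℚ {α} = IntermediateField.adjoin ℚ (Set.range B) ↔
      n - 1 ≤ (Finset.univ.image a).card :=
  stmt_3_general n hn b B hbint hroots hgal a α hα
end

section
/- Let β be an algebraic number of degree n ≥ 5 over ℚ such that β^k ∉ ℚ for every nonzero integer k. Let β_1, …, β_n be the conjugates of β and suppose that 𝔄_n ⊆ Gal(ℚ(β_1,…,β_n)/ℚ), i.e., the image of the permutation representation of the Galois group of the splitting field on the roots contains the alternating group 𝔄_n. Then for all integers v_1, …, v_n that are not all equal, the product β_1^{v_1} ⋯ β_n^{v_n} is not a root of unity. -/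
/-!
Write `ζ = ∏ βᵢ^{vᵢ}` with `ζ^m = 1`. Every `σ ∈ 𝔄ₙ` is induced by a field automorphism, so
`∏ β_{σ i}^{m vᵢ} = 1` as well. Comparing the relations for `σ` and `σ γ` with `γ` a 3-cycle
on `a, b, c` gives a relation involving only three roots, with exponent `m (v_a - v_c) ≠ 0` at
`σ c`; since `𝔄ₙ` is 3-transitive for `n ≥ 5`, two such relations that differ only in the
image of `c` show that `βᵣ^{m (v_a - v_c)}` is independent of `r`. Multiplying over all `r`,
`β^{m (v_a - v_c) n}` is a power of the rational number `∏ βᵣ = ±N(β)`, contradicting the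
hypothesis on `β`.
-/

open Polynomial

open Equiv

theorem Finset.exists_notMem_of_card_lt {α : Type*} [Fintype α] (s : Finset α)
    (h : s.card < Fintype.card α) : ∃ x, x ∉ s := by
  simpa using Finset.exists_mem_notMem_of_card_lt_card (t := Finset.univ) h

theorem exists_mem_alternatingGroup_apply_eq₃ {α : Type*} [Fintype α] [DecidableEq α]
    (hα : 5 ≤ Fintype.card α) {a b c p q r : α}
    (hab : a ≠ b) (hac : a ≠ c) (hbc : b ≠ c) (hpq : p ≠ q) (hpr : p ≠ r) (hqr : q ≠ r) :
    ∃ σ ∈ alternatingGroup α, σ a = p ∧ σ b = q ∧ σ c = r := by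
  have := alternatingGroup.isMultiplyPretransitive α
  have : MulAction.IsMultiplyPretransitive (alternatingGroup α) α 3 :=
    MulAction.isMultiplyPretransitive_of_le (n := Nat.card α - 2)
      (by rw [Nat.card_eq_fintype_card]; omega) (by omega)
  let x : Fin 3 ↪ α := ⟨![a, b, c], by
    intro i j; fin_cases i <;> fin_cases j <;> simp [hab, hac, hbc, hab.symm, hac.symm, hbc.symm]⟩
  let y : Fin 3 ↪ α := ⟨![p, q, r], by
    intro i j; fin_cases i <;> fin_cases j <;> simp [hpq, hpr, hqr, hpq.symm, hpr.symm, hqr.symm]⟩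
  obtain ⟨⟨σ, hσ⟩, h⟩ := MulAction.exists_smul_eq (alternatingGroup α) x y
  exact ⟨σ, hσ, congrArg (· 0) h, congrArg (· 1) h, congrArg (· 2) h⟩

section AlternatingRelation

variable {G α : Type*} [CommGroup G] [Fintype α] [DecidableEq α]

def IsAlternatingRelation (y : α → G) (v : α → ℤ) : Prop :=
  ∀ σ ∈ alternatingGroup α, ∏ i, y (σ i) ^ v i = 1

variable {y : α → G} {v : α → ℤ}

theorem IsAlternatingRelation.threeCycle (h : IsAlternatingRelation y v) {a b c : α}
    (hab : a ≠ b) (hac : a ≠ c) (hbc : b ≠ c) {σ : Perm α} (hσ : σ ∈ alternatingGroup α) :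
    y (σ a) ^ (v c - v a) * y (σ b) ^ (v a - v b) * y (σ c) ^ (v b - v c) = 1 := by
  set γ := swap a b * swap a c
  have hγ : γ ∈ alternatingGroup α :=
    (Perm.isThreeCycle_swap_mul_swap_same hab hac hbc).mem_alternatingGroup
  have hγ_fix : ∀ i ∉ ({a, b, c} : Finset α), γ i = i := by
    intro i hi
    simp only [Finset.mem_insert, Finset.mem_singleton, not_or] at hi
    simp [γ, swap_apply_of_ne_of_ne, hi.1, hi.2.1, hi.2.2]
  have hshift : ∏ i, y (σ i) ^ v (γ i) = 1 := by
    rw [← h (σ * γ⁻¹) (mul_mem hσ (inv_mem hγ)),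
      ← Equiv.prod_comp γ (fun i => y ((σ * γ⁻¹) i) ^ v i)]
    simp
  have hquot : ∏ i, y (σ i) ^ (v (γ i) - v i) = 1 := by
    simp only [zpow_sub, Finset.prod_mul_distrib, Finset.prod_inv_distrib, hshift, h σ hσ,
      inv_one, mul_one]
  rw [← Finset.prod_subset (Finset.subset_univ {a, b, c})
    (fun i _ hi => by rw [hγ_fix i hi, sub_self, zpow_zero])] at hquot
  rw [Finset.prod_insert (by simp [hab, hac]), Finset.prod_pair hbc] at hquot
  simpa [γ, swap_apply_of_ne_of_ne, hab, hac, hbc, hab.symm, hac.symm, hbc.symm, mul_assoc]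
    using hquot

theorem IsAlternatingRelation.zpow_sub_eq (h : IsAlternatingRelation y v)
    (hα : 5 ≤ Fintype.card α) (a c r r' : α) : y r ^ (v a - v c) = y r' ^ (v a - v c) := by
  rcases eq_or_ne a c with rfl | hac
  · simp
  obtain ⟨b, hb⟩ := Finset.exists_notMem_of_card_lt {a, c}
    (Finset.card_le_two.trans_lt (by omega))
  obtain ⟨p, hp⟩ := Finset.exists_notMem_of_card_lt {r, r'}
    (Finset.card_le_two.trans_lt (by omega))
  obtain ⟨q, hq⟩ := Finset.exists_notMem_of_card_lt {r, r', p}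
    (Finset.card_le_three.trans_lt (by omega))
  simp only [Finset.mem_insert, Finset.mem_singleton, not_or] at hb hp hq
  -- `σ` and `σ'` agree on `a` and `b` and send `c` to `r` and `r'` respectively.
  obtain ⟨σ, hσ, hσa, hσc, hσb⟩ := exists_mem_alternatingGroup_apply_eq₃ hα
    hac (Ne.symm hb.1) (Ne.symm hb.2) hp.1 (Ne.symm hq.2.2) (Ne.symm hq.1)
  obtain ⟨σ', hσ', hσ'a, hσ'c, hσ'b⟩ := exists_mem_alternatingGroup_apply_eq₃ hα
    hac (Ne.symm hb.1) (Ne.symm hb.2) hp.2 (Ne.symm hq.2.2) (Ne.symm hq.2.1)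
  have h₁ := h.threeCycle hac (Ne.symm hb.1) (Ne.symm hb.2) hσ
  have h₂ := h.threeCycle hac (Ne.symm hb.1) (Ne.symm hb.2) hσ'
  rw [hσa, hσb, hσc] at h₁
  rw [hσ'a, hσ'b, hσ'c] at h₂
  exact mul_left_cancel (mul_right_cancel (h₁.trans h₂.symm))

end AlternatingRelation

theorem Polynomial.Monic.prod_aroots_eq_algebraMap {K L : Type*} [Field K] [Field L]
    [IsAlgClosed L] [Algebra K L] {f : K[X]} (hf : f.Monic) :
    (f.aroots L).prod = algebraMap K L ((-1) ^ f.natDegree * f.coeff 0) := by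
  have h := (IsAlgClosed.splits (f.map (algebraMap K L))).coeff_zero_eq_prod_roots_of_monic
    (hf.map _)
  rw [coeff_map, hf.natDegree_map] at h
  rw [map_mul, h, map_pow, map_neg, map_one, ← mul_assoc, ← mul_pow]
  simp [aroots]

theorem exists_prod_eq_algebraMap_of_aroots_eq {K L ι : Type*} [Field K] [Field L]
    [IsAlgClosed L] [Algebra K L] [Fintype ι] {b : L} (hb : IsIntegral K b) (hb0 : b ≠ 0)
    {B : ι → L} (hroots : (minpoly K b).aroots L = Multiset.map B Finset.univ.val) :
    ∃ q : K, q ≠ 0 ∧ ∏ i, B i = algebraMap K L q :=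
  ⟨_, mul_ne_zero (pow_ne_zero _ (neg_ne_zero.mpr one_ne_zero))
    (minpoly.coeff_zero_ne_zero hb hb0), by
    rw [← (minpoly.monic hb).prod_aroots_eq_algebraMap, hroots]; rfl⟩

theorem isAlternatingRelation_of_prod_zpow_pow_eq_one {n m : ℕ} {B : Fin n → ℂ}
    (hB0 : ∀ i, B i ≠ 0)
    (hgal : (alternatingGroup (Fin n) : Set (Perm (Fin n))) ⊆ galoisImage n B)
    {v : Fin n → ℤ} (hζ : (∏ i, B i ^ v i) ^ m = 1) :
    IsAlternatingRelation (fun i => Units.mk0 (B i) (hB0 i) ^ m) v := by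
  intro σ hσ
  obtain ⟨φ, hφ⟩ := hgal hσ
  have hφζ : φ (∏ i, B i ^ v i) = ∏ i, B (σ i) ^ v i := by simp [map_zpow₀, hφ]
  ext
  calc ((∏ i, (Units.mk0 (B (σ i)) (hB0 _) ^ m) ^ v i : ℂˣ) : ℂ)
      = (∏ i, B (σ i) ^ v i) ^ m := by
        simp only [Units.coe_prod, Units.val_zpow_eq_zpow_val, Units.val_mk0,
          ← zpow_natCast, zpow_comm _ (m : ℤ), Finset.prod_zpow]
    _ = 1 := by rw [← hφζ, ← map_pow, hζ, map_one]
    _ = ((1 : ℂˣ) : ℂ) := rfl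

theorem stmt_6_general (n : ℕ) (hn : 5 ≤ n) (b : ℂ) (B : Fin n → ℂ)
    (hb : IsIntegral ℚ b)
    (hroots : (minpoly ℚ b).aroots ℂ = Multiset.map B Finset.univ.val)
    (hpow : ∀ k : ℤ, k ≠ 0 → ∀ q : ℚ, b ^ k ≠ (q : ℂ))
    (hgal : (alternatingGroup (Fin n) : Set (Equiv.Perm (Fin n))) ⊆ galoisImage n B)
    (v : Fin n → ℤ) (hv : ∃ i j, v i ≠ v j) :
    ¬ ∃ m : ℕ, 0 < m ∧ (∏ i, B i ^ v i) ^ m = 1 := by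
  rintro ⟨m, hm, hζ⟩
  obtain ⟨a, c, hac⟩ := hv
  have hb0 : b ≠ 0 := fun h => hpow 1 one_ne_zero 0 (by simp [h])
  obtain ⟨q, hq0, hprod⟩ := exists_prod_eq_algebraMap_of_aroots_eq hb hb0 hroots
  rw [eq_ratCast] at hprod
  have hB0 : ∀ i, B i ≠ 0 :=
    fun i => Finset.prod_ne_zero_iff.mp (hprod ▸ Rat.cast_ne_zero.mpr hq0) i (Finset.mem_univ i)
  obtain ⟨i₀, -, hi₀⟩ : ∃ i ∈ Finset.univ.val, B i = b := Multiset.mem_map.mp <|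
    hroots ▸ mem_aroots.mpr ⟨minpoly.ne_zero hb, minpoly.aeval ℚ b⟩
  set k : ℤ := m * (v a - v c)
  have hk : ∀ i, B i ^ k = b ^ k := fun i => by
    simpa [k, zpow_mul, hi₀] using congrArg Units.val
      ((isAlternatingRelation_of_prod_zpow_pow_eq_one hB0 hgal hζ).zpow_sub_eq
        (by simpa using hn) a c i i₀)
  refine hpow (k * n) (by simp [k, hm.ne', sub_eq_zero, hac]; omega) (q ^ k) ?_
  rw [Rat.cast_zpow, ← hprod, ← Finset.prod_zpow, Finset.prod_congr rfl fun i _ => hk i]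
  simp [zpow_mul]

/-- Let `β` be an algebraic number of degree `n ≥ 5` such that no nonzero
integer power of `β` is rational, with conjugates `B 0, …, B (n-1)`, and suppose the
Galois group of the splitting field contains `𝔄ₙ`.  Then for all integers `vᵢ`, not all
equal, the product `∏ Bᵢ^{vᵢ}` is not a root of unity. -/
theorem stmt_6 (n : ℕ) (hn : 5 ≤ n) (b : ℂ) (B : Fin n → ℂ)
    (hb : IsIntegral ℚ b)
    (hdeg : (minpoly ℚ b).natDegree = n)
    (hroots : (minpoly ℚ b).aroots ℂ = Multiset.map B Finset.univ.val)
    (hpow : ∀ k : ℤ, k ≠ 0 → ∀ q : ℚ, b ^ k ≠ (q : ℂ))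
    (hgal : (alternatingGroup (Fin n) : Set (Equiv.Perm (Fin n))) ⊆ galoisImage n B)
    (v : Fin n → ℤ) (hv : ∃ i j, v i ≠ v j) :
    ¬ ∃ m : ℕ, 0 < m ∧ (∏ i, B i ^ v i) ^ m = 1 :=
  stmt_6_general n hn b B hb hroots hpow hgal v hv
end

section
/- Let n ≥ 5, let y ∈ H_n and let h ∈ {1,…,n−1}. Then s_n(z^{(n,h)}, y) = (n/(2h(n−h))) · binom(n,h)^{-1} · ∑_{S ⊆ {1,…,n}, |S| = h} |∑_{j ∈ S} y_j|. -/
/-- `sₙ(x,y) = (2/n!) ∑_{σ ∈ 𝔄ₙ} |(1/n) ∑ⱼ x_{σ(j)} yⱼ|`. -/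
noncomputable def snBil (n : ℕ) (x y : Fin n → ℝ) : ℝ :=
  (2 / (n.factorial : ℝ)) *
    ∑ σ : alternatingGroup (Fin n), |(1 / (n : ℝ)) * ∑ j, x ((σ : Equiv.Perm (Fin n)) j) * y j|

/-- The vector `z^{(n,h)}` with coordinates `n/(2h)` (first `h` coordinates) and
`-n/(2(n-h))` (remaining coordinates). -/
noncomputable def zvec (n h : ℕ) : Fin n → ℝ :=
  fun j => if (j : ℕ) < h then (n : ℝ) / (2 * h) else -((n : ℝ) / (2 * ((n : ℝ) - h)))

open Finset Equiv

/-- A permutation mapping a finset onto another finset of the same cardinality. -/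
lemma exists_perm_image {α : Type*} [Fintype α] [DecidableEq α] {S T : Finset α}
    (hST : S.card = T.card) : ∃ ρ : Equiv.Perm α, S.image ρ = T := by
  classical
  let e : {x // x ∈ S} ≃ {x // x ∈ T} := Finset.equivOfCardEq hST
  refine ⟨e.extendSubtype, ?_⟩
  apply Finset.eq_of_subset_of_card_le
  · intro x hx
    simp only [Finset.mem_image] at hx
    obtain ⟨a, ha, rfl⟩ := hx
    exact e.extendSubtype_mem a ha
  · rw [Finset.card_image_of_injective _ (Equiv.injective _), hST]

/-- For `n ≥ 5`, `y ∈ Hₙ` and `1 ≤ h ≤ n-1`,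
`sₙ(z^{(n,h)}, y) = (n/(2h(n-h)))·C(n,h)⁻¹·∑_{|S| = h} |∑_{j ∈ S} yⱼ|`. -/
theorem stmt_12 (n h : ℕ) (hn : 5 ≤ n) (h1 : 1 ≤ h) (h2 : h ≤ n - 1)
    (y : Fin n → ℝ) (hy : ∑ j, y j = 0) :
    snBil n (zvec n h) y =
      ((n : ℝ) / (2 * h * ((n : ℝ) - h))) * ((n.choose h : ℝ))⁻¹ *
        ∑ S ∈ Finset.powersetCard h (Finset.univ : Finset (Fin n)), |∑ j ∈ S, y j| := by
  classical
  have hhn : h < n := by omega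
  have hh0 : (0:ℝ) < (h:ℝ) := by exact_mod_cast h1
  have hnh0 : (0:ℝ) < (n:ℝ) - (h:ℝ) := by
    have : (h:ℝ) < (n:ℝ) := by exact_mod_cast hhn
    linarith
  have hn0 : (0:ℝ) < (n:ℝ) := by positivity
  set c : ℝ := (n : ℝ) / (2 * h * ((n : ℝ) - h)) with hc
  have hc0 : 0 ≤ c := by positivity
  -- the reference set of the first h indices
  set T₀ : Finset (Fin n) := Finset.univ.filter (fun j => (j : ℕ) < h) with hT₀
  have hT₀card : T₀.card = h := by
    have : T₀ = Finset.Iio (⟨h, hhn⟩ : Fin n) := by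
      ext j
      simp [hT₀, Finset.mem_Iio, Fin.lt_def]
    rw [this, Fin.card_Iio]
  -- the fiber map
  set g : Equiv.Perm (Fin n) → Finset (Fin n) := fun σ => T₀.map σ.symm.toEmbedding with hg
  have hgmem : ∀ (σ : Equiv.Perm (Fin n)) (j : Fin n), j ∈ g σ ↔ σ j ∈ T₀ := by
    intro σ j
    rw [hg]
    simp [Finset.mem_map_equiv]
  have hgcard : ∀ σ : Equiv.Perm (Fin n), (g σ).card = h := by
    intro σ; rw [hg]; simp [Finset.card_map, hT₀card]
  -- Step A: pointwise computation
  have key : ∀ σ : Equiv.Perm (Fin n),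
      |(1 / (n : ℝ)) * ∑ j, zvec n h (σ j) * y j| = c * |∑ j ∈ g σ, y j| := by
    intro σ
    have hcompl : ∑ j ∈ (g σ)ᶜ, y j = -∑ j ∈ g σ, y j := by
      have := Finset.sum_add_sum_compl (g σ) y
      rw [hy] at this
      linarith
    have hsum : ∑ j, zvec n h (σ j) * y j
        = ((n:ℝ) * (n:ℝ) / (2 * h * ((n:ℝ) - h))) * ∑ j ∈ g σ, y j := by
      rw [← Finset.sum_add_sum_compl (g σ)]
      have e1 : ∀ j ∈ g σ, zvec n h (σ j) * y j = ((n:ℝ) / (2 * h)) * y j := by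
        intro j hj
        have : ((σ j : Fin n) : ℕ) < h := by
          have := (hgmem σ j).1 hj
          simpa [hT₀] using this
        simp [zvec, this]
      have e2 : ∀ j ∈ (g σ)ᶜ, zvec n h (σ j) * y j
          = (-((n:ℝ) / (2 * ((n:ℝ) - h)))) * y j := by
        intro j hj
        have hj' : j ∉ g σ := Finset.mem_compl.1 hj
        have : ¬ ((σ j : Fin n) : ℕ) < h := by
          intro hlt
          exact hj' ((hgmem σ j).2 (by simp [hT₀, hlt]))
        simp [zvec, this]
      rw [Finset.sum_congr rfl e1, Finset.sum_congr rfl e2, ← Finset.mul_sum,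
        ← Finset.mul_sum, hcompl]
      field_simp
      ring
    rw [hsum, ← mul_assoc]
    rw [abs_mul]
    congr 1
    rw [abs_of_nonneg (by positivity), hc]
    field_simp
  -- abbreviations
  set F : Finset (Fin n) → ℝ := fun S => |∑ j ∈ S, y j| with hF
  set SS : ℝ := ∑ S ∈ Finset.powersetCard h (Finset.univ : Finset (Fin n)), F S with hSS
  -- Step C: alternating sum is half the full sum
  have hA : ∑ σ : alternatingGroup (Fin n), F (g (σ : Equiv.Perm (Fin n)))
      = ∑ σ ∈ Finset.univ.filter
          (fun σ : Equiv.Perm (Fin n) => σ ∈ alternatingGroup (Fin n)), F (g σ) := by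
    exact (Finset.sum_subtype (p := fun σ : Equiv.Perm (Fin n) => σ ∈ alternatingGroup (Fin n))
      _ (fun x => by simp) (fun σ => F (g σ))).symm
  obtain ⟨a, b, hab, hiff⟩ : ∃ a b : Fin n, a ≠ b ∧ ((a : ℕ) < h ↔ (b : ℕ) < h) := by
    rcases Nat.lt_or_ge h 2 with h' | h'
    · exact ⟨⟨1, by omega⟩, ⟨2, by omega⟩, Fin.ne_of_val_ne (by norm_num),
        by show (1:ℕ) < h ↔ (2:ℕ) < h; omega⟩
    · exact ⟨⟨0, by omega⟩, ⟨1, by omega⟩, Fin.ne_of_val_ne (by norm_num),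
        by show (0:ℕ) < h ↔ (1:ℕ) < h; omega⟩
  set τ : Equiv.Perm (Fin n) := Equiv.swap a b with hτ
  have hτT₀ : ∀ x : Fin n, τ x ∈ T₀ ↔ x ∈ T₀ := by
    intro x
    rcases eq_or_ne x a with rfl | hxa
    · simp [hτ, Equiv.swap_apply_left, hT₀, hiff]
    rcases eq_or_ne x b with rfl | hxb
    · simp [hτ, Equiv.swap_apply_right, hT₀, hiff]
    · simp [hτ, Equiv.swap_apply_of_ne_of_ne hxa hxb]
  have hgτ : ∀ σ : Equiv.Perm (Fin n), g (τ * σ) = g σ := by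
    intro σ
    ext j
    rw [hgmem, hgmem]
    exact hτT₀ (σ j)
  have hτsign : Equiv.Perm.sign τ = -1 := Equiv.Perm.sign_swap hab
  have hhalf : 2 * (∑ σ ∈ Finset.univ.filter
      (fun σ : Equiv.Perm (Fin n) => σ ∈ alternatingGroup (Fin n)), F (g σ))
      = ∑ σ : Equiv.Perm (Fin n), F (g σ) := by
    have hswap : ∑ σ ∈ Finset.univ.filter
          (fun σ : Equiv.Perm (Fin n) => σ ∈ alternatingGroup (Fin n)), F (g σ)
        = ∑ σ ∈ Finset.univ.filter
          (fun σ : Equiv.Perm (Fin n) => ¬ σ ∈ alternatingGroup (Fin n)), F (g σ) := by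
      refine Finset.sum_nbij' (fun σ => τ * σ) (fun σ => τ * σ) ?_ ?_ ?_ ?_ ?_
      · intro σ hσ
        simp only [Finset.mem_filter, Finset.mem_univ, true_and,
          Equiv.Perm.mem_alternatingGroup] at hσ ⊢
        rw [Equiv.Perm.sign_mul, hτsign, hσ]
        decide
      · intro σ hσ
        simp only [Finset.mem_filter, Finset.mem_univ, true_and,
          Equiv.Perm.mem_alternatingGroup] at hσ ⊢
        rcases Int.units_eq_one_or (Equiv.Perm.sign σ) with hs | hs
        · exact absurd hs hσ
        · rw [Equiv.Perm.sign_mul, hτsign, hs]; decide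
      · intro σ _
        show τ * (τ * σ) = σ
        rw [← mul_assoc, hτ, Equiv.swap_mul_self, one_mul]
      · intro σ _
        show τ * (τ * σ) = σ
        rw [← mul_assoc, hτ, Equiv.swap_mul_self, one_mul]
      · intro σ _; rw [hgτ]
    rw [two_mul]
    nth_rewrite 2 [hswap]
    exact Finset.sum_filter_add_sum_filter_not _ _ _
  -- Step D: fiberwise counting
  set k : ℕ := (Finset.univ.filter (fun σ : Equiv.Perm (Fin n) => g σ = T₀)).card with hk
  have hmaps : ∀ σ : Equiv.Perm (Fin n),
      g σ ∈ Finset.powersetCard h (Finset.univ : Finset (Fin n)) := by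
    intro σ
    rw [Finset.mem_powersetCard]
    exact ⟨Finset.subset_univ _, hgcard σ⟩
  have hconst : ∀ S ∈ Finset.powersetCard h (Finset.univ : Finset (Fin n)),
      (Finset.univ.filter (fun σ : Equiv.Perm (Fin n) => g σ = S)).card = k := by
    intro S hS
    have hScard : T₀.card = S.card := by
      rw [hT₀card, (Finset.mem_powersetCard.1 hS).2]
    obtain ⟨ρ, hρ⟩ := exists_perm_image hScard
    have hρ' : S.map ρ.symm.toEmbedding = T₀ := by
      rw [← hρ]
      ext x
      simp [Finset.mem_map, Finset.mem_image]
    have hgmul : ∀ σ π : Equiv.Perm (Fin n),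
        g (σ * π) = (g σ).map π.symm.toEmbedding := by
      intro σ π
      ext j
      rw [hgmem, Finset.mem_map_equiv, Equiv.symm_symm, hgmem]
      rfl
    rw [hk]
    refine Finset.card_nbij' (fun σ => σ * ρ) (fun σ => σ * ρ⁻¹) ?_ ?_ ?_ ?_
    · intro σ hσ
      simp only [Finset.mem_coe, Finset.mem_filter, Finset.mem_univ, true_and] at hσ ⊢
      rw [hgmul, hσ, hρ']
    · intro σ hσ
      simp only [Finset.mem_coe, Finset.mem_filter, Finset.mem_univ, true_and] at hσ ⊢
      rw [hgmul, hσ]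
      rw [show (ρ⁻¹ : Equiv.Perm (Fin n)).symm = ρ from rfl, ← hρ, Finset.map_eq_image]
      rfl
    · intro σ _; simp [mul_assoc]
    · intro σ _; simp [mul_assoc]
  have hfull : ∑ σ : Equiv.Perm (Fin n), F (g σ) = (k : ℝ) * SS := by
    rw [← Finset.sum_fiberwise_of_maps_to (fun σ _ => hmaps σ) (fun σ => F (g σ))]
    rw [hSS, Finset.mul_sum]
    refine Finset.sum_congr rfl fun S hS => ?_
    rw [Finset.sum_congr rfl (fun σ hσ => ?_), Finset.sum_const, nsmul_eq_mul, hconst S hS]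
    · rw [(Finset.mem_filter.1 hσ).2]
  have hcount : n.factorial = n.choose h * k := by
    have := Finset.card_eq_sum_card_fiberwise (fun σ (_ : σ ∈ Finset.univ) => hmaps σ)
    rw [Finset.sum_congr rfl hconst, Finset.sum_const, smul_eq_mul,
      Finset.card_powersetCard, Finset.card_univ, Finset.card_univ, Fintype.card_fin,
      Fintype.card_perm, Fintype.card_fin] at this
    exact this
  have hk0 : k ≠ 0 := by
    intro h0
    have := hcount
    rw [h0, mul_zero] at this
    exact Nat.factorial_ne_zero n this
  have hC0 : (n.choose h : ℝ) ≠ 0 :=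
    Nat.cast_ne_zero.2 (Nat.choose_pos hhn.le).ne'
  -- Assemble
  rw [snBil]
  have hsum1 : ∑ σ : alternatingGroup (Fin n),
      |(1 / (n : ℝ)) * ∑ j, zvec n h ((σ : Equiv.Perm (Fin n)) j) * y j|
      = c * ∑ σ : alternatingGroup (Fin n), F (g (σ : Equiv.Perm (Fin n))) := by
    rw [Finset.mul_sum]
    exact Finset.sum_congr rfl fun σ _ => key _
  rw [hsum1, hA]
  have hfac : ((n.factorial : ℝ)) = (n.choose h : ℝ) * (k : ℝ) := by exact_mod_cast hcount
  have hSA : (∑ σ ∈ Finset.univ.filter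
      (fun σ : Equiv.Perm (Fin n) => σ ∈ alternatingGroup (Fin n)), F (g σ))
      = (k : ℝ) * SS / 2 := by
    rw [← hfull]
    linarith [hhalf]
  rw [hSA, hfac]
  have hk0' : (k : ℝ) ≠ 0 := Nat.cast_ne_zero.2 hk0
  field_simp
end

section
/- Let n ≥ 5 and let h, k ∈ {1,…,n−1}. Then s_n(z^{(n,h)}, z^{(n,k)}) = (n²·(h − ⌊hk/n⌋)·(k − ⌊hk/n⌋))/(2hk(n−h)(n−k)) · binom(n,h)^{-1} · binom(k, ⌊hk/n⌋) · binom(n−k, h − ⌊hk/n⌋), where ⌊x⌋ denotes the greatest integer less than or equal to x. -/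
/-!
Write `z^{(n,h)}` as an affine function of the indicator of the first `h` coordinates. Then
`(1/n) ∑ⱼ z^{(n,h)}_{σ j} z^{(n,k)}_j = n²(n X(σ) - hk) / (4hk(n-h)(n-k))`, where `X(σ)` counts the
`j < k` with `σ j < h`. Since `n ≥ 3`, `z^{(n,k)}` has two equal coordinates, and the transposition
swapping them is odd, so the sum over `𝔄ₙ` is half the sum over `𝔖ₙ`. Over `𝔖ₙ` the statistic `X`
is hypergeometric: every `h`-set arises as `σ⁻¹{j < h}` for `h!(n-h)!` permutations, and
`C(k,a) C(n-k,h-a)` of the `h`-sets meet `{j < k}` in `a` points. Finally, with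
`T(a) = C(k,a) C(n-k,h-a)` and `G(a) = a(n-k-h+a) T(a)`, one has `T(a)(hk - an) = G(a+1) - G(a)`.
So the signed sum `∑ T(a)(an - hk)` vanishes, and the absolute sum is twice the part with
`a ≤ m = ⌊hk/n⌋`, which telescopes to `2 G(m+1) = 2 (h-m)(k-m) T(m)`.
-/

open Finset
open scoped Nat

def hypergeomCount (n k r a : ℕ) : ℕ := k.choose a * (n - k).choose (r - a)

lemma Nat.cast_choose_succ_right_eq {R : Type*} [CommRing R] (k a : ℕ) :
    (k.choose (a + 1) : R) * (a + 1) = k.choose a * (k - a) := by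
  rcases lt_or_ge a k with hak | hka
  · have := Nat.choose_succ_right_eq k a
    rw [← Nat.cast_sub hak.le]
    exact_mod_cast congrArg (Nat.cast : ℕ → R) this
  · rw [Nat.choose_eq_zero_of_lt (by omega : k < a + 1)]
    rcases hka.eq_or_lt with rfl | hlt
    · simp
    · simp [Nat.choose_eq_zero_of_lt hlt]

section Hypergeometric

variable {n k r : ℕ}

lemma succ_mul_hypergeomCount_succ (hkn : k ≤ n) {a : ℕ} (har : a < r) :
    ((a : ℝ) + 1) * (n - k - r + a + 1) * hypergeomCount n k r (a + 1) =
      (k - a) * (r - a) * hypergeomCount n k r a := by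
  have hk := Nat.cast_choose_succ_right_eq (R := ℝ) k a
  have hnk := Nat.cast_choose_succ_right_eq (R := ℝ) (n - k) (r - (a + 1))
  rw [show r - (a + 1) + 1 = r - a by omega, Nat.cast_sub hkn,
    Nat.cast_sub (by omega : a + 1 ≤ r)] at hnk
  push_cast at hnk
  simp only [hypergeomCount, Nat.cast_mul]
  linear_combination (↑((n - k).choose (r - (a + 1))) * (n - k - r + a + 1 : ℝ)) * hk
    - (k - a) * ↑(k.choose a) * hnk

lemma sum_range_hypergeomCount_mul_sub (hkn : k ≤ n) {N : ℕ} (hN : N ≤ r) :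
    ∑ a ∈ range N, (hypergeomCount n k r a : ℝ) * (r * k - a * n) =
      N * (n - k - r + N) * hypergeomCount n k r N := by
  induction N with
  | zero => simp
  | succ N ih =>
    rw [sum_range_succ, ih (by omega)]
    push_cast
    linear_combination -succ_mul_hypergeomCount_succ hkn (Nat.lt_of_succ_le hN)

lemma sum_hypergeomCount_mul_sub_eq_zero (hkn : k ≤ n) :
    ∑ a ∈ range (r + 1), (hypergeomCount n k r a : ℝ) * (r * k - a * n) = 0 := by
  rw [sum_range_succ, sum_range_hypergeomCount_mul_sub hkn le_rfl]
  ring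

theorem sum_hypergeomCount_mul_abs_sub (hr : 0 < r) (hkn : k < n) :
    ∑ a ∈ range (r + 1), (hypergeomCount n k r a : ℝ) * |(a : ℝ) * n - r * k| =
      2 * (r - (r * k / n : ℕ)) * (k - (r * k / n : ℕ)) * hypergeomCount n k r (r * k / n) := by
  set m := r * k / n
  have hmr : m < r := (Nat.div_lt_iff_lt_mul (by omega)).2 (Nat.mul_lt_mul_of_pos_left hkn hr)
  have hsplit (f : ℕ → ℝ) : ∑ a ∈ range (r + 1), f a =
      ∑ a ∈ range (m + 1), f a + ∑ a ∈ Ico (m + 1) (r + 1), f a :=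
    (sum_range_add_sum_Ico f (by omega)).symm
  have hlow : ∑ a ∈ range (m + 1), (hypergeomCount n k r a : ℝ) * |(a : ℝ) * n - r * k| =
      ∑ a ∈ range (m + 1), (hypergeomCount n k r a : ℝ) * (r * k - a * n) := by
    refine sum_congr rfl fun a ha => ?_
    have : a * n ≤ r * k := (Nat.mul_le_mul_right n (by simpa [Nat.lt_succ_iff] using ha)).trans
      (Nat.div_mul_le_self _ _)
    rw [abs_of_nonpos (sub_nonpos.2 (by exact_mod_cast this)), neg_sub]
  have hhigh : ∑ a ∈ Ico (m + 1) (r + 1), (hypergeomCount n k r a : ℝ) * |(a : ℝ) * n - r * k| =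
      -∑ a ∈ Ico (m + 1) (r + 1), (hypergeomCount n k r a : ℝ) * (r * k - a * n) := by
    rw [← sum_neg_distrib]
    refine sum_congr rfl fun a ha => ?_
    have : r * k < a * n := ((Nat.div_lt_iff_lt_mul (by omega)).1 (Nat.lt_succ_self m)).trans_le
      (Nat.mul_le_mul_right n (mem_Ico.1 ha).1)
    rw [abs_of_pos (sub_pos.2 (by exact_mod_cast this))]
    ring
  have htotal := sum_hypergeomCount_mul_sub_eq_zero (r := r) hkn.le
  rw [hsplit] at htotal ⊢
  rw [hlow, hhigh, sum_range_hypergeomCount_mul_sub hkn.le hmr]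
  rw [sum_range_hypergeomCount_mul_sub hkn.le hmr] at htotal
  push_cast at htotal ⊢
  linear_combination (-1 : ℝ) * htotal + 2 * succ_mul_hypergeomCount_succ hkn.le hmr

end Hypergeometric

section Counting

variable {α : Type*} [Fintype α] [DecidableEq α]

def Equiv.Perm.preimageEquiv (p q : α → Prop) [DecidablePred p] [DecidablePred q] :
    {σ : Equiv.Perm α // ∀ a, p (σ a) ↔ q a} ≃
      ({a // q a} ≃ {a // p a}) × ({a // ¬q a} ≃ {a // ¬p a}) where
  toFun σ := (σ.1.subtypeEquiv fun a => (σ.2 a).symm,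
    σ.1.subtypeEquiv fun a => not_congr (σ.2 a).symm)
  invFun e := ⟨Equiv.subtypeCongr e.1 e.2, fun a => by
    by_cases ha : q a <;> simp [Equiv.subtypeCongr, ha, (e.1 ⟨a, _⟩).2, (e.2 ⟨a, _⟩).2]⟩
  left_inv σ := by
    ext a
    by_cases ha : q a <;> simp [Equiv.subtypeCongr, ha]
  right_inv e := by
    ext ⟨a, ha⟩ <;> simp [Equiv.subtypeCongr, ha]

lemma card_filter_perm_mem (σ : Equiv.Perm α) (s : Finset α) :
    #{a | σ a ∈ s} = #s :=
  card_equiv σ (by simp)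

lemma card_perm_filter_preimage_eq (s t : Finset α) (hts : #t = #s) :
    #{σ : Equiv.Perm α | ({a | σ a ∈ s} : Finset α) = t} = (#s)! * (Fintype.card α - #s)! := by
  have hs : Fintype.card {a // a ∈ t} = Fintype.card {a // a ∈ s} := by simp [hts]
  have hsc : Fintype.card {a // a ∉ t} = Fintype.card {a // a ∉ s} := by
    simp [Fintype.card_subtype_compl, hts]
  rw [← Fintype.card_subtype,
    Fintype.card_congr (Equiv.subtypeEquivRight (q := fun σ : Equiv.Perm α => ∀ a, σ a ∈ s ↔ a ∈ t)
      fun σ => by simp [Finset.ext_iff]),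
    Fintype.card_congr (Equiv.Perm.preimageEquiv (· ∈ s) (· ∈ t)), Fintype.card_prod,
    Fintype.card_equiv (Fintype.equivOfCardEq hs), Fintype.card_equiv (Fintype.equivOfCardEq hsc),
    hs, hsc, Fintype.card_subtype_compl, Fintype.card_coe]

theorem sum_perm_eq_sum_powersetCard {M : Type*} [AddCommMonoid M] (s : Finset α)
    (F : Finset α → M) :
    ∑ σ : Equiv.Perm α, F {a | σ a ∈ s} =
      ((#s)! * (Fintype.card α - #s)!) • ∑ t ∈ powersetCard #s univ, F t := by
  rw [← sum_fiberwise_of_maps_to' (fun σ _ => mem_powersetCard.2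
    ⟨subset_univ {a | σ a ∈ s}, card_filter_perm_mem σ s⟩) F, smul_sum]
  refine sum_congr rfl fun t ht => ?_
  rw [sum_const, card_perm_filter_preimage_eq s t (mem_powersetCard.1 ht).2]

lemma card_powersetCard_filter_card_inter (t : Finset α) {r a : ℕ} (har : a ≤ r) :
    #{T ∈ powersetCard r univ | #(T ∩ t) = a} =
      hypergeomCount (Fintype.card α) #t r a := by
  rw [hypergeomCount, ← card_compl, ← card_powersetCard, ← card_powersetCard, ← card_product]
  have hsplit {A B : Finset α} (hA : A ⊆ t) (hB : Disjoint B t) :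
      (A ∪ B) ∩ t = A ∧ (A ∪ B) \ t = B := by
    rw [union_inter_distrib_right, inter_eq_left.2 hA, disjoint_iff_inter_eq_empty.1 hB,
      union_empty, union_sdiff_distrib, sdiff_eq_empty_iff_subset.2 hA, hB.sdiff_eq_left, empty_union]
    exact ⟨rfl, rfl⟩
  refine card_nbij' (fun T => (T ∩ t, T \ t)) (fun P => P.1 ∪ P.2) ?_ ?_ ?_ ?_
  · intro T hT
    simp only [coe_filter, mem_powersetCard, Set.mem_ofPred_eq, coe_product, Set.mem_prod,
      mem_coe] at hT ⊢
    refine ⟨⟨inter_subset_right, hT.2⟩, fun x hx => by simp_all, ?_⟩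
    have := card_inter_add_card_sdiff T t
    omega
  · rintro ⟨A, B⟩ hAB
    obtain ⟨⟨hA, hAa⟩, hB, hBa⟩ : (A ⊆ t ∧ #A = a) ∧ Disjoint B t ∧ #B = r - a := by
      simpa [subset_compl_iff_disjoint_right] using hAB
    simp only [coe_filter, mem_powersetCard, Set.mem_ofPred_eq, subset_univ, true_and,
      (hsplit hA hB).1, hAa, card_union_of_disjoint (hB.mono_right hA).symm, hBa, and_true]
    omega
  · intro T _
    ext x
    by_cases x ∈ t <;> simp [*]
  · rintro ⟨A, B⟩ hAB
    obtain ⟨⟨hA, -⟩, hB, -⟩ : (A ⊆ t ∧ #A = a) ∧ Disjoint B t ∧ #B = r - a := by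
      simpa [subset_compl_iff_disjoint_right] using hAB
    simp [hsplit hA hB]

theorem sum_powersetCard_eq_sum_hypergeomCount {M : Type*} [AddCommMonoid M] (t : Finset α)
    (r : ℕ) (G : ℕ → M) :
    ∑ T ∈ powersetCard r univ, G #(T ∩ t) =
      ∑ a ∈ range (r + 1), hypergeomCount (Fintype.card α) #t r a • G a := by
  rw [← sum_fiberwise_of_maps_to' (fun T hT => mem_range_succ_iff.2
    ((card_le_card (inter_subset_left (s₂ := t))).trans (mem_powersetCard.1 hT).2.le)) G]
  refine sum_congr rfl fun a ha => ?_
  rw [sum_const, card_powersetCard_filter_card_inter t (mem_range_succ_iff.1 ha)]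

end Counting

section Alternating

variable {α : Type*} [Fintype α] [DecidableEq α]

theorem sum_perm_eq_two_smul_sum_alternatingGroup {M : Type*} [AddCommMonoid M]
    {τ : Equiv.Perm α} (hτ : Equiv.Perm.sign τ = -1) (F : Equiv.Perm α → M)
    (hF : ∀ σ, F (σ * τ) = F σ) :
    ∑ σ, F σ = 2 • ∑ σ : alternatingGroup α, F σ := by
  -- the decidability instance behind `alternatingGroup.instFintype`
  let _ : DecidablePred (· ∈ alternatingGroup α) := Equiv.Perm.sign.decidableMemKer
  rw [← Fintype.sum_subtype_add_sum_subtype (· ∈ alternatingGroup α) F, two_smul]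
  refine congrArg (_ + ·) (Fintype.sum_equiv ((Equiv.mulRight τ).subtypeEquiv fun σ => ?_) _ _
    fun σ => (hF σ).symm).symm
  rcases Int.units_eq_one_or (Equiv.Perm.sign σ) with hσ | hσ <;>
    simp [Equiv.Perm.mem_alternatingGroup, hσ, hτ]

lemma snBil_eq_one_div_factorial_mul_sum_perm {n : ℕ} {x y : Fin n → ℝ} {a b : Fin n}
    (hab : a ≠ b) (hy : y a = y b) :
    snBil n x y = 1 / n ! * ∑ σ : Equiv.Perm (Fin n), |1 / n * ∑ j, x (σ j) * y j| := by
  have hyτ (j : Fin n) : y (Equiv.swap a b j) = y j := by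
    rw [Equiv.swap_apply_def]
    split_ifs <;> simp_all
  rw [sum_perm_eq_two_smul_sum_alternatingGroup (Equiv.Perm.sign_swap hab) _ fun σ => ?_, snBil,
    two_smul]
  · ring
  · simp only [Equiv.Perm.mul_apply]
    rw [← Equiv.sum_comp (Equiv.swap a b) (fun j => x (σ j) * y j)]
    simp only [hyτ]

end Alternating

section Zvec

variable {n h k : ℕ}

lemma exists_ne_zvec_eq (hn : 3 ≤ n) (k : ℕ) : ∃ a b : Fin n, a ≠ b ∧ zvec n k a = zvec n k b := by
  obtain ⟨a, b, hab, hk⟩ :=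
    Fintype.exists_ne_map_eq_of_card_lt (fun j : Fin n => (j : ℕ) < k) (by simp; omega)
  exact ⟨a, b, hab, by simp only [zvec, hk]⟩

def firstCoords (n c : ℕ) : Finset (Fin n) := {i | (i : ℕ) < c}

lemma card_firstCoords {c : ℕ} (hc : c ≤ n) : #(firstCoords n c) = c := by
  rw [firstCoords, Fin.card_filter_val_lt]
  omega

lemma zvec_eq_indicator (hh : 0 < h) (hhn : h < n) (j : Fin n) :
    zvec n h j =
      n ^ 2 / (2 * h * (n - h)) * (if j ∈ firstCoords n h then 1 else 0) - n / (2 * (n - h)) := by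
  have : (n : ℝ) - h ≠ 0 := sub_ne_zero.2 (by exact_mod_cast hhn.ne')
  have : (h : ℝ) ≠ 0 := Nat.cast_ne_zero.2 hh.ne'
  simp only [zvec, firstCoords, mem_filter, mem_univ, true_and]
  split_ifs <;> field_simp; ring

lemma affine_boole_mul_affine_boole {R : Type*} [CommRing R] (a b c d : R) (p q : Prop)
    [Decidable p] [Decidable q] :
    (a * (if p then 1 else 0) - b) * (c * (if q then 1 else 0) - d) =
      a * c * (if p ∧ q then 1 else 0) - a * d * (if p then 1 else 0) -
        b * c * (if q then 1 else 0) + b * d := by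
  by_cases hp : p <;> by_cases hq : q <;> simp [hp, hq] <;> ring

lemma one_div_mul_sum_zvec_mul_zvec (hh : 0 < h) (hhn : h < n) (hk : 0 < k) (hkn : k < n)
    (σ : Equiv.Perm (Fin n)) :
    1 / n * ∑ j, zvec n h (σ j) * zvec n k j =
      n ^ 2 / (4 * h * k * (n - h) * (n - k)) *
        (#(({j | σ j ∈ firstCoords n h} : Finset (Fin n)) ∩ firstCoords n k) * n - h * k) := by
  simp only [zvec_eq_indicator hh hhn, zvec_eq_indicator hk hkn, affine_boole_mul_affine_boole,
    sum_add_distrib, sum_sub_distrib, ← mul_sum, sum_boole, sum_const, card_univ, Fintype.card_fin,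
    nsmul_eq_mul, filter_and, filter_mem_eq_inter, univ_inter, card_filter_perm_mem,
    card_firstCoords hhn.le, card_firstCoords hkn.le]
  have hnh : (n : ℝ) - h ≠ 0 := sub_ne_zero.2 (by exact_mod_cast hhn.ne')
  have hnk : (n : ℝ) - k ≠ 0 := sub_ne_zero.2 (by exact_mod_cast hkn.ne')
  have hn0 : (n : ℝ) ≠ 0 := Nat.cast_ne_zero.2 (by omega)
  have hh0 : (h : ℝ) ≠ 0 := Nat.cast_ne_zero.2 hh.ne'
  have hk0 : (k : ℝ) ≠ 0 := Nat.cast_ne_zero.2 hk.ne'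
  field_simp
  ring

lemma sum_perm_abs_one_div_mul_sum_zvec_mul_zvec (hh : 0 < h) (hhn : h < n) (hk : 0 < k)
    (hkn : k < n) :
    ∑ σ : Equiv.Perm (Fin n), |1 / n * ∑ j, zvec n h (σ j) * zvec n k j| =
      n ^ 2 / (4 * h * k * (n - h) * (n - k)) * (h ! * (n - h)!) *
        ∑ a ∈ range (h + 1), (hypergeomCount n k h a : ℝ) * |(a : ℝ) * n - h * k| := by
  have hnh : (0 : ℝ) < n - h := sub_pos.2 (by exact_mod_cast hhn)
  have hnk : (0 : ℝ) < n - k := sub_pos.2 (by exact_mod_cast hkn)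
  have hc : 0 < (n : ℝ) ^ 2 / (4 * h * k * (n - h) * (n - k)) := by
    have : (0 : ℝ) < h := by exact_mod_cast hh
    have : (0 : ℝ) < k := by exact_mod_cast hk
    have : (0 : ℝ) < n := by exact_mod_cast hh.trans hhn
    exact div_pos (by positivity) (mul_pos (mul_pos (by positivity) hnh) hnk)
  simp only [one_div_mul_sum_zvec_mul_zvec hh hhn hk hkn, abs_mul, abs_of_pos hc, ← mul_sum]
  rw [sum_perm_eq_sum_powersetCard (firstCoords n h)
      (fun T => |(#(T ∩ firstCoords n k) : ℝ) * n - h * k|),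
    sum_powersetCard_eq_sum_hypergeomCount _ _ (fun a => |(a : ℝ) * n - h * k|),
    card_firstCoords hhn.le, card_firstCoords hkn.le, Fintype.card_fin]
  simp only [nsmul_eq_mul, Nat.cast_mul, mul_assoc]

end Zvec

/-- For `n ≥ 5` and `1 ≤ h, k ≤ n-1`, with `m = ⌊hk/n⌋`,
`sₙ(z^{(n,h)}, z^{(n,k)}) = (n²(h-m)(k-m))/(2hk(n-h)(n-k)) · C(n,h)⁻¹ · C(k,m) · C(n-k,h-m)`. -/
theorem stmt_13 (n h k : ℕ) (hn : 5 ≤ n) (h1 : 1 ≤ h) (h2 : h ≤ n - 1)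
    (k1 : 1 ≤ k) (k2 : k ≤ n - 1) :
    snBil n (zvec n h) (zvec n k) =
      ((n : ℝ) ^ 2 * ((h : ℝ) - (h * k / n : ℕ)) * ((k : ℝ) - (h * k / n : ℕ))) /
          (2 * h * k * ((n : ℝ) - h) * ((n : ℝ) - k)) *
        ((n.choose h : ℝ))⁻¹ * (k.choose (h * k / n) : ℝ) *
        ((n - k).choose (h - h * k / n) : ℝ) := by
  have hhn : h < n := by omega
  have hkn : k < n := by omega
  obtain ⟨a, b, hab, hzk⟩ := exists_ne_zvec_eq (show 3 ≤ n by omega) k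
  have hfact : (n ! : ℝ) = n.choose h * h ! * (n - h)! := by
    exact_mod_cast (Nat.choose_mul_factorial_mul_factorial hhn.le).symm
  have hnh : (n : ℝ) - h ≠ 0 := sub_ne_zero.2 (by exact_mod_cast hhn.ne')
  have hnk : (n : ℝ) - k ≠ 0 := sub_ne_zero.2 (by exact_mod_cast hkn.ne')
  have hchoose : (n.choose h : ℝ) ≠ 0 := by exact_mod_cast (Nat.choose_pos hhn.le).ne'
  rw [snBil_eq_one_div_factorial_mul_sum_perm hab hzk,
    sum_perm_abs_one_div_mul_sum_zvec_mul_zvec h1 hhn k1 hkn, sum_hypergeomCount_mul_abs_sub h1 hkn,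
    hypergeomCount, Nat.cast_mul, hfact]
  field_simp
  ring
end

section
/- Let n ≥ 5 and let y = (y_1,…,y_n) ∈ H_n be such that y_{j+1} − y_j ≥ 1 for all j = 1, …, n−2 and y_{n−1} = y_n. Then |y|_1 ≥ (n−3)/5. -/
/-!
Pair the outermost coordinates: along a chain with steps at least `1`,
`|z 0| + |z m| ≥ z m - z 0 ≥ m`. Peeling off such pairs one at a time bounds the
`ℓ¹`-sum of `z 0, …, z m` below by `m + (m - 2) + (m - 4) + ⋯ ≥ m (m + 2) / 4`.
With `m = n - 2` this already exceeds `n (n - 3) / 5`.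
-/

open Finset

theorem le_sub_of_one_le_sub_succ {z : ℕ → ℝ} {m : ℕ}
    (h : ∀ j < m, 1 ≤ z (j + 1) - z j) : (m : ℝ) ≤ z m - z 0 :=
  calc (m : ℝ) = ∑ _j ∈ range m, (1 : ℝ) := by simp
    _ ≤ ∑ j ∈ range m, (z (j + 1) - z j) := sum_le_sum fun j hj => h j (mem_range.1 hj)
    _ = z m - z 0 := sum_range_sub z m

theorem mul_add_two_div_four_le_sum_abs {m : ℕ} :
    ∀ {z : ℕ → ℝ}, (∀ j < m, 1 ≤ z (j + 1) - z j) →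
      (m : ℝ) * (m + 2) / 4 ≤ ∑ j ∈ range (m + 1), |z j| := by
  induction m using Nat.twoStepInduction with
  | zero => intro z _; simp
  | one =>
    intro z h
    have := h 0 one_pos
    simp only [sum_range_succ, sum_range_zero, Nat.cast_one]
    linarith [neg_abs_le (z 0), le_abs_self (z 1)]
  | more m ih _ =>
    intro z h
    have hinner := ih (z := fun j => z (j + 1)) fun j hj => h (j + 1) (by omega)
    have hends := le_sub_of_one_le_sub_succ h
    rw [sum_range_succ, sum_range_succ']
    push_cast at hends ⊢
    linarith [neg_abs_le (z 0), le_abs_self (z (m + 2))]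

/-- Let `n ≥ 5` and `y ∈ Hₙ` (indexed by `Fin n`; in 1-based notation
`y_j = y ⟨j-1,_⟩`) with `y_{j+1} - y_j ≥ 1` for `j = 1,…,n-2` and `y_{n-1} = y_n`.
Then `|y|₁ ≥ (n-3)/5`. -/
theorem stmt_14 (n : ℕ) (hn : 5 ≤ n) (y : Fin n → ℝ)
    (hstep : ∀ j : ℕ, (hj : j + 3 ≤ n) → 1 ≤ y ⟨j + 1, by omega⟩ - y ⟨j, by omega⟩) :
    ((n : ℝ) - 3) / 5 ≤ (1 / (n : ℝ)) * ∑ j, |y j| := by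
  set z : ℕ → ℝ := fun j => if h : j < n then y ⟨j, h⟩ else 0
  have hz : ∀ j (h : j < n), z j = y ⟨j, h⟩ := fun j h => dif_pos h
  have hbound := mul_add_two_div_four_le_sum_abs (m := n - 2) (z := z) fun j hj => by
    rw [hz j (by omega), hz (j + 1) (by omega)]
    exact hstep j (by omega)
  have hsum : ∑ j ∈ range (n - 2 + 1), |z j| ≤ ∑ j, |y j| :=
    calc ∑ j ∈ range (n - 2 + 1), |z j| ≤ ∑ j ∈ range n, |z j| :=
          sum_le_sum_of_subset_of_nonneg (range_subset_range.2 (by omega))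
            fun _ _ _ => abs_nonneg _
      _ = ∑ j, |y j| := by
          rw [← Fin.sum_univ_eq_sum_range]
          exact Fintype.sum_congr _ _ fun i => by rw [hz i i.2]
  push_cast [Nat.cast_sub (by omega : 2 ≤ n)] at hbound
  rw [one_div, inv_mul_eq_div, le_div_iff₀ (by positivity)]
  nlinarith
end

section
/- Let β be an algebraic number of degree n ≥ 5 over ℚ with conjugates β_1, …, β_n, and suppose that 𝔄_n ⊆ Gal(ℚ(β_1,…,β_n)/ℚ), i.e., the image of the permutation representation of the Galois group of the splitting field on the roots contains the alternating group 𝔄_n. Then for any integers v_1, …, v_n that are not all equal, one has ∑_{i=1}^n v_i β_i ∉ ℚ. -/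
open Polynomial

lemma exists_notMem_of_card_le {n : ℕ} (hn : 5 ≤ n) (s : Finset (Fin n))
    (hs : s.card ≤ 4) : ∃ x, x ∉ s := by
  by_contra h
  push_neg at h
  have : (Finset.univ : Finset (Fin n)).card ≤ s.card :=
    Finset.card_le_card fun x _ => h x
  simp [Finset.card_univ] at this
  omega

/-- Let `β` be an algebraic number of degree `n ≥ 5` with conjugates
`B 0, …, B (n-1)`, and suppose the Galois group of the splitting field contains `𝔄ₙ`.
Then for all integers `vᵢ`, not all equal, `∑ vᵢ Bᵢ ∉ ℚ`. -/
theorem stmt_15 (n : ℕ) (hn : 5 ≤ n) (b : ℂ) (B : Fin n → ℂ)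
    (hb : IsIntegral ℚ b)
    (hdeg : (minpoly ℚ b).natDegree = n)
    (hroots : (minpoly ℚ b).aroots ℂ = Multiset.map B Finset.univ.val)
    (hgal : (alternatingGroup (Fin n) : Set (Equiv.Perm (Fin n))) ⊆ galoisImage n B)
    (v : Fin n → ℤ) (hv : ∃ i j, v i ≠ v j) :
    ∀ q : ℚ, (∑ i, (v i : ℂ) * B i) ≠ (q : ℂ) := by
  intro q hq
  -- the roots are pairwise distinct
  have hsep : (minpoly ℚ b).Separable :=
    PerfectField.separable_of_irreducible (minpoly.irreducible hb)
  have hnodup : ((minpoly ℚ b).aroots ℂ).Nodup := Polynomial.nodup_roots hsep.map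
  have hBinj : Function.Injective B := by
    have h1 : (Multiset.map B Finset.univ.val).Nodup := hroots ▸ hnodup
    intro i j hij
    exact Multiset.inj_on_of_nodup_map h1 i (by simp) j (by simp) hij
  -- the sum is invariant under even permutations of the roots
  have key : ∀ τ : Equiv.Perm (Fin n), τ ∈ alternatingGroup (Fin n) →
      ∑ p, (v p : ℂ) * B (τ p) = ∑ p, (v p : ℂ) * B p := by
    intro τ hτ
    obtain ⟨σ, hσ⟩ := hgal hτ
    have h1 : σ (∑ p, (v p : ℂ) * B p) = ∑ p, (v p : ℂ) * B (τ p) := by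
      rw [map_sum]
      refine Finset.sum_congr rfl fun p _ => ?_
      rw [map_mul, map_intCast, hσ]
    rw [hq, map_ratCast] at h1
    rw [← h1, hq]
  -- the key relation from double transpositions
  have rel : ∀ i j k l : Fin n, i ≠ j → i ≠ k → i ≠ l → j ≠ k → j ≠ l → k ≠ l →
      ((v i : ℂ) - v j) * (B i - B j) = ((v l : ℂ) - v k) * (B k - B l) := by
    intro i j k l hij hik hil hjk hjl hkl
    set τ := Equiv.swap i j * Equiv.swap k l with hτdef
    have hτA : τ ∈ alternatingGroup (Fin n) := by
      simp [Equiv.Perm.mem_alternatingGroup, hτdef, map_mul,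
        Equiv.Perm.sign_swap hij, Equiv.Perm.sign_swap hkl]
    have hsum := key τ hτA
    have hτi : τ i = j := by
      simp [hτdef, Equiv.Perm.mul_apply, Equiv.swap_apply_of_ne_of_ne hik hil]
    have hτj : τ j = i := by
      simp [hτdef, Equiv.Perm.mul_apply, Equiv.swap_apply_of_ne_of_ne hjk hjl]
    have hτk : τ k = l := by
      simp [hτdef, Equiv.Perm.mul_apply,
        Equiv.swap_apply_of_ne_of_ne hil.symm hjl.symm]
    have hτl : τ l = k := by
      simp [hτdef, Equiv.Perm.mul_apply,
        Equiv.swap_apply_of_ne_of_ne hik.symm hjk.symm]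
    have hout : ∀ p : Fin n, p ∉ ({i, j, k, l} : Finset (Fin n)) → τ p = p := by
      intro p hp
      simp only [Finset.mem_insert, Finset.mem_singleton, not_or] at hp
      obtain ⟨h1, h2, h3, h4⟩ := hp
      simp [hτdef, Equiv.Perm.mul_apply, Equiv.swap_apply_of_ne_of_ne h3 h4,
        Equiv.swap_apply_of_ne_of_ne h1 h2]
    have hzero : ∑ p, ((v p : ℂ) * B (τ p) - (v p : ℂ) * B p) = 0 := by
      rw [Finset.sum_sub_distrib, hsum, sub_self]
    have hS : ∑ p ∈ ({i, j, k, l} : Finset (Fin n)),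
        ((v p : ℂ) * B (τ p) - (v p : ℂ) * B p) = 0 := by
      rw [Finset.sum_subset (Finset.subset_univ _)
        (fun p _ hp => by rw [hout p hp, sub_self]), hzero]
    rw [Finset.sum_insert (by simp [hij, hik, hil]),
      Finset.sum_insert (by simp [hjk, hjl]),
      Finset.sum_insert (by simp [hkl]), Finset.sum_singleton,
      hτi, hτj, hτk, hτl] at hS
    linear_combination -hS
  -- find five distinct indices, starting with i, j where v differs
  obtain ⟨i, j, hvij⟩ := hv
  have hij : i ≠ j := fun h => hvij (h ▸ rfl)
  obtain ⟨k, hk⟩ := exists_notMem_of_card_le hn {i, j} (by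
    have h1 := Finset.card_insert_le i ({j} : Finset (Fin n))
    simp at h1 ⊢; omega)
  obtain ⟨l, hl⟩ := exists_notMem_of_card_le hn {i, j, k} (by
    have h1 := Finset.card_insert_le i ({j, k} : Finset (Fin n))
    have h2 := Finset.card_insert_le j ({k} : Finset (Fin n))
    simp at h1 h2 ⊢; omega)
  obtain ⟨m, hm⟩ := exists_notMem_of_card_le hn {i, j, k, l} (by
    have h1 := Finset.card_insert_le i ({j, k, l} : Finset (Fin n))
    have h2 := Finset.card_insert_le j ({k, l} : Finset (Fin n))
    have h3 := Finset.card_insert_le k ({l} : Finset (Fin n))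
    simp at h1 h2 h3 ⊢; omega)
  simp only [Finset.mem_insert, Finset.mem_singleton, not_or] at hk hl hm
  obtain ⟨hik, hjk⟩ := hk
  obtain ⟨hil, hjl, hkl⟩ := hl
  obtain ⟨him, hjm, hkm, hlm⟩ := hm
  have r1 := rel i j k l hij (Ne.symm hik) (Ne.symm hil) (Ne.symm hjk) (Ne.symm hjl)
    (Ne.symm hkl)
  have r2 := rel i j k m hij (Ne.symm hik) (Ne.symm him) (Ne.symm hjk) (Ne.symm hjm)
    (Ne.symm hkm)
  have r3 := rel i j l m hij (Ne.symm hil) (Ne.symm him) (Ne.symm hjl) (Ne.symm hjm)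
    (Ne.symm hlm)
  set x := ((v i : ℂ) - v j) * (B i - B j) with hxdef
  have hx : x ≠ 0 := by
    refine mul_ne_zero (sub_ne_zero.2 ?_) (sub_ne_zero.2 fun h => hij (hBinj h))
    exact_mod_cast hvij
  set P := ((v l : ℂ) - v k) with hPdef
  set Q := ((v m : ℂ) - v l) with hQdef
  set U := B k - B l with hUdef
  set W := B l - B m with hWdef
  -- r1 : x = P * U, r3 : x = Q * W, r2 : x = (P + Q) * (U + W)
  have r2' : x = (P + Q) * (U + W) := by
    rw [r2, hPdef, hQdef, hUdef, hWdef]; ring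
  have eA : P * W + Q * U = -x := by linear_combination r1 + r3 - r2'
  have eB : x * (P ^ 2 + P * Q + Q ^ 2) = 0 := by
    linear_combination (P ^ 2) * r3 + (Q ^ 2) * r1 + (P * Q) * eA
  have hPQ : P ^ 2 + P * Q + Q ^ 2 = 0 := (mul_eq_zero.mp eB).resolve_left hx
  have hQ0 : Q ≠ 0 := by
    intro h
    rw [h, zero_mul] at r3
    exact hx r3
  have hQZ : v m - v l ≠ 0 := by
    intro h
    apply hQ0
    rw [hQdef]
    exact_mod_cast sub_eq_zero.mpr (sub_eq_zero.mp h)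
  have hZ : (v l - v k) ^ 2 + (v l - v k) * (v m - v l) + (v m - v l) ^ 2 = 0 := by
    have : (((v l - v k) ^ 2 + (v l - v k) * (v m - v l) + (v m - v l) ^ 2 : ℤ) : ℂ) = 0 := by
      push_cast
      rw [hPdef, hQdef] at hPQ
      convert hPQ using 2 <;> ring
    exact_mod_cast this
  have h1 : 0 < (v m - v l) ^ 2 := by positivity
  nlinarith [sq_nonneg (2 * (v l - v k) + (v m - v l)), sq_nonneg (v m - v l)]
end

section
/- Let β be an algebraic integer of degree n ≥ 5 over ℚ with conjugates β_1, …, β_n, and suppose Gal(ℚ(β_1,…,β_n)/ℚ) = 𝔄_n. Let a_1, …, a_n ∈ ℤ and suppose that α = a_1β_1 + ⋯ + a_nβ_n generates ℚ(β_1,…,β_n) over ℚ. Then h(α) ≤ log(M(β)·∑_{i=1}^n |a_i|). -/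
open Polynomial

/-- The primitive integer minimal polynomial of an algebraic number `γ`. -/
noncomputable def intMinPoly (γ : ℂ) : Polynomial ℤ :=
  (IsLocalization.integerNormalization (nonZeroDivisors ℤ) (minpoly ℚ γ)).primPart

/-- The Mahler measure `M(γ) = |a| ∏ max(1,|γᵢ|)`. -/
noncomputable def mahlerM (γ : ℂ) : ℝ :=
  ((intMinPoly γ).leadingCoeff.natAbs : ℝ) *
    (((minpoly ℚ γ).aroots ℂ).map (fun z => max 1 ‖z‖)).prod

/-- The logarithmic Weil height `h(γ) = log M(γ) / deg γ`. -/
noncomputable def heightH (γ : ℂ) : ℝ :=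
  Real.log (mahlerM γ) / (minpoly ℚ γ).natDegree

/-!
Every conjugate of `α` is the image of `α` under an embedding `ψ : ℚ(α) → ℂ`, and since all `βᵢ`
lie in `ℚ(α)` it equals `∑ aᵢ ψ(βᵢ)`, where each `ψ(βᵢ)` is again a conjugate of `β`. A conjugate
of `β` has absolute value at most `M(β)`, so every conjugate of `α` has absolute value at most
`C = M(β) ∑ |aᵢ|`. As `α` is an algebraic integer, `M(α)` is the product of `max(1, |α'|)` over its
conjugates `α'`, hence `M(α) ≤ C ^ deg α`.
-/

open IntermediateField

lemma intMinPoly_leadingCoeff_natAbs {γ : ℂ} (hγ : IsIntegral ℤ γ) :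
    (intMinPoly γ).leadingCoeff.natAbs = 1 := by
  obtain ⟨c, hc0, hc⟩ :=
    IsLocalization.integerNormalization_spec (nonZeroDivisors ℤ) (minpoly ℚ γ)
  have hmonic := minpoly.monic hγ
  have hnorm : IsLocalization.integerNormalization (nonZeroDivisors ℤ) (minpoly ℚ γ) =
      C c * minpoly ℤ γ := by
    apply Polynomial.map_injective _ (algebraMap ℤ ℚ).injective_int
    rw [hc, minpoly.isIntegrallyClosed_eq_field_fractions' ℚ hγ, Polynomial.map_mul, map_C,
      ← smul_eq_C_mul, algebraMap_smul]
  have hne : C c * minpoly ℤ γ ≠ 0 :=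
    mul_ne_zero (C_ne_zero.mpr (nonZeroDivisors.ne_zero hc0)) hmonic.ne_zero
  obtain ⟨u, hu, huC⟩ := Polynomial.isUnit_iff.mp (isUnit_primPart_C c)
  rw [intMinPoly, hnorm, primPart_mul hne, hmonic.isPrimitive.primPart_eq, ← huC,
    leadingCoeff_mul, leadingCoeff_C, hmonic.leadingCoeff, mul_one]
  exact Int.isUnit_iff_natAbs_eq.mp hu

lemma mahlerM_eq_prod_aroots {γ : ℂ} (hγ : IsIntegral ℤ γ) :
    mahlerM γ = (((minpoly ℚ γ).aroots ℂ).map fun z => max 1 ‖z‖).prod := by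
  rw [mahlerM, intMinPoly_leadingCoeff_natAbs hγ, Nat.cast_one, one_mul]

lemma one_le_mahlerM {γ : ℂ} (hγ : IsIntegral ℤ γ) : 1 ≤ mahlerM γ := by
  rw [mahlerM_eq_prod_aroots hγ]
  exact Multiset.one_le_prod fun x hx => by
    obtain ⟨z, -, rfl⟩ := Multiset.mem_map.mp hx
    exact le_max_left _ _

lemma norm_le_mahlerM {γ z : ℂ} (hγ : IsIntegral ℤ γ) (hz : z ∈ (minpoly ℚ γ).aroots ℂ) :
    ‖z‖ ≤ mahlerM γ := by
  rw [mahlerM_eq_prod_aroots hγ, ← Multiset.cons_erase hz, Multiset.map_cons,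
    Multiset.prod_cons]
  refine (le_max_right 1 ‖z‖).trans (le_mul_of_one_le_right (zero_le_one.trans
    (le_max_left _ _)) (Multiset.one_le_prod fun x hx => ?_))
  obtain ⟨w, -, rfl⟩ := Multiset.mem_map.mp hx
  exact le_max_left _ _

lemma heightH_le_log_of_forall_norm_le {γ : ℂ} (hγ : IsIntegral ℤ γ) {C : ℝ} (hC : 1 ≤ C)
    (hroots : ∀ z ∈ (minpoly ℚ γ).aroots ℂ, ‖z‖ ≤ C) : heightH γ ≤ Real.log C := by
  have hdeg : 0 < (minpoly ℚ γ).natDegree := minpoly.natDegree_pos hγ.tower_top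
  have hM : mahlerM γ ≤ C ^ (minpoly ℚ γ).natDegree := by
    rw [mahlerM_eq_prod_aroots hγ, ← IsAlgClosed.card_aroots_eq_natDegree (B := ℂ),
      ← Multiset.prod_replicate, ← Multiset.map_const']
    exact Multiset.prod_map_le_prod_map₀ _ _ (fun z _ => zero_le_one.trans (le_max_left _ _))
      fun z hz => max_le hC (hroots z hz)
  rw [heightH, div_le_iff₀ (by exact_mod_cast hdeg), mul_comm, ← Real.log_pow]
  exact Real.log_le_log (zero_lt_one.trans_le (one_le_mahlerM hγ)) hM

lemma isIntegral_of_aeval_minpoly_eq_zero {γ x : ℂ} (hγ : IsIntegral ℤ γ)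
    (hx : aeval x (minpoly ℚ γ) = 0) : IsIntegral ℤ x := by
  rw [minpoly.isIntegrallyClosed_eq_field_fractions' ℚ hγ, aeval_map_algebraMap] at hx
  exact ⟨minpoly ℤ γ, minpoly.monic hγ, hx⟩

lemma exists_eq_sum_of_mem_aroots_minpoly {ι : Type*} [Fintype ι] {α z : ℂ}
    (hα : IsIntegral ℚ α) (hz : z ∈ (minpoly ℚ α).aroots ℂ) (a : ι → ℤ) {x : ι → ℂ}
    (hx : ∀ i, x i ∈ ℚ⟮α⟯) (hsum : α = ∑ i, (a i : ℂ) * x i) {p : ℚ[X]}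
    (hp : ∀ i, aeval (x i) p = 0) :
    ∃ y : ι → ℂ, (∀ i, aeval (y i) p = 0) ∧ z = ∑ i, (a i : ℂ) * y i := by
  set ψ := (algHomAdjoinIntegralEquiv ℚ hα).symm ⟨z, hz⟩
  refine ⟨fun i => ψ ⟨x i, hx i⟩, fun i => ?_, ?_⟩
  · have hpx : aeval (⟨x i, hx i⟩ : ℚ⟮α⟯) p = 0 :=
      Subtype.val_injective <|
        (aeval_algebraMap_apply ℂ (⟨x i, hx i⟩ : ℚ⟮α⟯) p).symm.trans (hp i)
    rw [aeval_algHom_apply, hpx, map_zero]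
  · have hgen : AdjoinSimple.gen ℚ α = ∑ i, a i • (⟨x i, hx i⟩ : ℚ⟮α⟯) := by
      ext
      simp [hsum, zsmul_eq_mul]
    have hψ : ψ (AdjoinSimple.gen ℚ α) = z :=
      algHomAdjoinIntegralEquiv_symm_apply_gen ℚ hα ⟨z, hz⟩
    rw [← hψ, hgen, map_sum]
    simp only [zsmul_eq_mul, map_mul, map_intCast]

lemma norm_sum_intCast_mul_le {ι : Type*} [Fintype ι] (a : ι → ℤ) {y : ι → ℂ} {C : ℝ}
    (hy : ∀ i, ‖y i‖ ≤ C) : ‖∑ i, (a i : ℂ) * y i‖ ≤ (∑ i, |(a i : ℝ)|) * C := by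
  rw [Finset.sum_mul]
  refine (norm_sum_le _ _).trans (Finset.sum_le_sum fun i _ => ?_)
  rw [norm_mul, Complex.norm_intCast]
  exact mul_le_mul_of_nonneg_left (hy i) (abs_nonneg _)

lemma one_le_sum_abs_intCast {ι : Type*} [Fintype ι] {a : ι → ℤ} (ha : a ≠ 0) :
    1 ≤ ∑ i, |(a i : ℝ)| := by
  obtain ⟨i, hi⟩ := Function.ne_iff.mp ha
  calc (1 : ℝ) ≤ |(a i : ℝ)| := by exact_mod_cast Int.one_le_abs hi
    _ ≤ ∑ i, |(a i : ℝ)| :=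
      Finset.single_le_sum (fun j _ => abs_nonneg (a j : ℝ)) (Finset.mem_univ i)

theorem stmt_16_general (n : ℕ) (hn : 5 ≤ n) (b : ℂ) (B : Fin n → ℂ)
    (hbint : IsIntegral ℤ b)
    (hdeg : (minpoly ℚ b).natDegree = n)
    (hroots : (minpoly ℚ b).aroots ℂ = Multiset.map B Finset.univ.val)
    (a : Fin n → ℤ) (α : ℂ) (hα : α = ∑ i, (a i : ℂ) * B i)
    (hgen : IntermediateField.adjoin ℚ {α} = IntermediateField.adjoin ℚ (Set.range B)) :
    heightH α ≤ Real.log (mahlerM b * ∑ i, |(a i : ℝ)|) := by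
  have hBroot : ∀ i, aeval (B i) (minpoly ℚ b) = 0 := fun i =>
    (mem_aroots.mp (hroots ▸ Multiset.mem_map_of_mem B (Finset.mem_univ_val i))).2
  have hBmem : ∀ i, B i ∈ ℚ⟮α⟯ := fun i => hgen ▸ subset_adjoin ℚ _ ⟨i, rfl⟩
  have hαint : IsIntegral ℤ α := hα ▸ IsIntegral.sum _ fun i _ =>
    isIntegral_algebraMap.mul (isIntegral_of_aeval_minpoly_eq_zero hbint (hBroot i))
  have ha : a ≠ 0 := by
    rintro rfl
    obtain ⟨i, -, rfl⟩ := Multiset.mem_map.mp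
      (hroots ▸ mem_aroots.mpr ⟨minpoly.ne_zero hbint.tower_top, minpoly.aeval ℚ b⟩)
    have hbot : ℚ⟮α⟯ = ⊥ := by simp [hα]
    have hdeg_one := minpoly.natDegree_eq_one_iff.mpr (mem_bot.mp (hbot ▸ hBmem i))
    omega
  refine heightH_le_log_of_forall_norm_le hαint
    (one_le_mul_of_one_le_of_one_le (one_le_mahlerM hbint) (one_le_sum_abs_intCast ha))
    fun z hz => ?_
  obtain ⟨y, hy, rfl⟩ :=
    exists_eq_sum_of_mem_aroots_minpoly hαint.tower_top hz a hBmem hα hBroot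
  rw [mul_comm]
  exact norm_sum_intCast_mul_le a fun i =>
    norm_le_mahlerM hbint (mem_aroots.mpr ⟨minpoly.ne_zero hbint.tower_top, hy i⟩)

/-- Let `β` be an algebraic integer of degree `n ≥ 5` with conjugates
`Bᵢ` and Galois group `𝔄ₙ`.  If `α = ∑ aᵢBᵢ` generates the splitting field, then
`h(α) ≤ log(M(β)·∑|aᵢ|)`. -/
theorem stmt_16 (n : ℕ) (hn : 5 ≤ n) (b : ℂ) (B : Fin n → ℂ)
    (hbint : IsIntegral ℤ b)
    (hdeg : (minpoly ℚ b).natDegree = n)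
    (hroots : (minpoly ℚ b).aroots ℂ = Multiset.map B Finset.univ.val)
    (hgal : galoisImage n B = (alternatingGroup (Fin n) : Set (Equiv.Perm (Fin n))))
    (a : Fin n → ℤ) (α : ℂ) (hα : α = ∑ i, (a i : ℂ) * B i)
    (hgen : IntermediateField.adjoin ℚ {α} = IntermediateField.adjoin ℚ (Set.range B)) :
    heightH α ≤ Real.log (mahlerM b * ∑ i, |(a i : ℝ)|) :=
  stmt_16_general n hn b B hbint hdeg hroots a α hα hgen
end

section
/- For every n ≥ 3, the number of permutations of 𝔖_n having no orbit of length 1 or 2 is at least n!/8; that is, |Λ_n| ≥ n!/8. -/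
open Equiv

namespace Stmt19Aux

/-- The predicate: no fixed point and no 2-cycle. -/
def Good {n : ℕ} (σ : Equiv.Perm (Fin n)) : Prop := ∀ x, σ x ≠ x ∧ σ (σ x) ≠ x

instance {n : ℕ} : DecidablePred (Good (n := n)) := fun σ => by
  unfold Good; infer_instance

noncomputable def a (n : ℕ) : ℕ := Nat.card {σ : Equiv.Perm (Fin n) // Good σ}

/-! ### Construction 1 : insert `0` into an existing cycle -/

def ins1 {m : ℕ} (e : Perm (Fin (m+2))) (p : Fin (m+2)) : Perm (Fin (m+3)) :=
  Equiv.Perm.decomposeFin.symm (p.succ, e)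

lemma ins1_zero {m : ℕ} (e : Perm (Fin (m+2))) (p : Fin (m+2)) :
    ins1 e p 0 = p.succ := by
  simp [ins1]

lemma ins1_succ {m : ℕ} (e : Perm (Fin (m+2))) (p : Fin (m+2)) (y : Fin (m+2)) :
    ins1 e p y.succ = if e y = p then 0 else (e y).succ := by
  rw [ins1, Equiv.Perm.decomposeFin_symm_apply_succ]
  by_cases h : e y = p
  · rw [if_pos h, h, Equiv.swap_apply_right]
  · rw [if_neg h, Equiv.swap_apply_of_ne_of_ne (Fin.succ_ne_zero _)
      (fun hh => h (Fin.succ_injective _ hh))]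

lemma good_ins1 {m : ℕ} {e : Perm (Fin (m+2))} (he : Good e) (p : Fin (m+2)) :
    Good (ins1 e p) := by
  intro x
  induction x using Fin.cases with
  | zero =>
    refine ⟨by rw [ins1_zero]; exact Fin.succ_ne_zero _, ?_⟩
    rw [ins1_zero, ins1_succ, if_neg (he p).1]
    exact Fin.succ_ne_zero _
  | succ i =>
    rw [ins1_succ]
    by_cases h : e i = p
    · rw [if_pos h]
      refine ⟨(Fin.succ_ne_zero i).symm, ?_⟩
      rw [ins1_zero, ← h]
      exact fun hh => (he i).1 (Fin.succ_injective _ hh)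
    · rw [if_neg h]
      refine ⟨fun hh => (he i).1 (Fin.succ_injective _ hh), ?_⟩
      rw [ins1_succ]
      by_cases h2 : e (e i) = p
      · rw [if_pos h2]; exact (Fin.succ_ne_zero i).symm
      · rw [if_neg h2]; exact fun hh => (he i).2 (Fin.succ_injective _ hh)

lemma ins1_cube {m : ℕ} {e : Perm (Fin (m+2))} (he : Good e) (p : Fin (m+2)) :
    ins1 e p (ins1 e p (ins1 e p 0)) ≠ 0 := by
  rw [ins1_zero, ins1_succ, if_neg (he p).1, ins1_succ]
  by_cases h : e (e p) = p
  · exact absurd h (he p).2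
  · rw [if_neg h]; exact Fin.succ_ne_zero _

lemma ins1_inj {m : ℕ} {e e' : Perm (Fin (m+2))} {p p' : Fin (m+2)}
    (h : ins1 e p = ins1 e' p') : e = e' ∧ p = p' := by
  have := Equiv.Perm.decomposeFin.symm.injective h
  rw [Prod.mk.injEq] at this
  exact ⟨this.2, Fin.succ_injective _ this.1⟩

/-! ### Construction 2 : insert a 3-cycle `0 → a → b → 0` -/

def emb3 {m : ℕ} (i : Fin (m+2)) (j : Fin (m+1)) : Fin m ↪ Fin (m+3) :=
  ⟨fun x => (i.succAbove (j.succAbove x)).succ, fun _ _ h =>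
    Fin.succAbove_right_injective
      (Fin.succAbove_right_injective (Fin.succ_injective _ h))⟩

lemma emb3_ne_zero {m : ℕ} (i : Fin (m+2)) (j : Fin (m+1)) (x : Fin m) :
    emb3 i j x ≠ 0 := Fin.succ_ne_zero _

lemma emb3_ne_A {m : ℕ} (i : Fin (m+2)) (j : Fin (m+1)) (x : Fin m) :
    emb3 i j x ≠ i.succ := fun h =>
  Fin.succAbove_ne i (j.succAbove x) (Fin.succ_injective _ h)

lemma emb3_ne_B {m : ℕ} (i : Fin (m+2)) (j : Fin (m+1)) (x : Fin m) :
    emb3 i j x ≠ (i.succAbove j).succ := fun h =>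
  Fin.succAbove_ne j x (Fin.succAbove_right_injective (Fin.succ_injective _ h))

lemma zero_not_range {m : ℕ} (i : Fin (m+2)) (j : Fin (m+1)) :
    (0 : Fin (m+3)) ∉ Set.range (emb3 i j) := by
  rintro ⟨x, hx⟩; exact emb3_ne_zero i j x hx

lemma A_not_range {m : ℕ} (i : Fin (m+2)) (j : Fin (m+1)) :
    (i.succ : Fin (m+3)) ∉ Set.range (emb3 i j) := by
  rintro ⟨x, hx⟩; exact emb3_ne_A i j x hx

lemma B_not_range {m : ℕ} (i : Fin (m+2)) (j : Fin (m+1)) :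
    ((i.succAbove j).succ : Fin (m+3)) ∉ Set.range (emb3 i j) := by
  rintro ⟨x, hx⟩; exact emb3_ne_B i j x hx

lemma A_ne_B {m : ℕ} (i : Fin (m+2)) (j : Fin (m+1)) :
    (i.succ : Fin (m+3)) ≠ (i.succAbove j).succ := fun h =>
  Fin.ne_succAbove i j (Fin.succ_injective _ h)

def ins2 {m : ℕ} (e : Perm (Fin m)) (i : Fin (m+2)) (j : Fin (m+1)) : Perm (Fin (m+3)) :=
  (e.viaFintypeEmbedding (emb3 i j)) *
    (swap 0 i.succ * swap i.succ (i.succAbove j).succ)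

lemma ins2_zero {m : ℕ} (e : Perm (Fin m)) (i : Fin (m+2)) (j : Fin (m+1)) :
    ins2 e i j 0 = i.succ := by
  simp only [ins2, Perm.mul_apply]
  rw [swap_apply_of_ne_of_ne (Fin.succ_ne_zero _).symm (Fin.succ_ne_zero _).symm,
    swap_apply_left, Equiv.Perm.viaFintypeEmbedding_apply_notMem_range _ _ (A_not_range i j)]

lemma ins2_A {m : ℕ} (e : Perm (Fin m)) (i : Fin (m+2)) (j : Fin (m+1)) :
    ins2 e i j i.succ = (i.succAbove j).succ := by
  simp only [ins2, Perm.mul_apply]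
  rw [swap_apply_left,
    swap_apply_of_ne_of_ne (Fin.succ_ne_zero _) (A_ne_B i j).symm,
    Equiv.Perm.viaFintypeEmbedding_apply_notMem_range _ _ (B_not_range i j)]

lemma ins2_B {m : ℕ} (e : Perm (Fin m)) (i : Fin (m+2)) (j : Fin (m+1)) :
    ins2 e i j (i.succAbove j).succ = 0 := by
  simp only [ins2, Perm.mul_apply]
  rw [swap_apply_right, swap_apply_right,
    Equiv.Perm.viaFintypeEmbedding_apply_notMem_range _ _ (zero_not_range i j)]

lemma ins2_emb {m : ℕ} (e : Perm (Fin m)) (i : Fin (m+2)) (j : Fin (m+1)) (x : Fin m) :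
    ins2 e i j (emb3 i j x) = emb3 i j (e x) := by
  simp only [ins2, Perm.mul_apply]
  rw [swap_apply_of_ne_of_ne (emb3_ne_A i j x) (emb3_ne_B i j x),
    swap_apply_of_ne_of_ne (emb3_ne_zero i j x) (emb3_ne_A i j x),
    Equiv.Perm.viaFintypeEmbedding_apply_image]

lemma cover {m : ℕ} (i : Fin (m+2)) (j : Fin (m+1)) (x : Fin (m+3)) :
    x = 0 ∨ x = i.succ ∨ x = (i.succAbove j).succ ∨ ∃ v, emb3 i j v = x := by
  rcases eq_or_ne x 0 with h | h
  · exact Or.inl h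
  obtain ⟨w, rfl⟩ := Fin.eq_succ_of_ne_zero h
  rcases eq_or_ne w i with rfl | hw
  · exact Or.inr (Or.inl rfl)
  obtain ⟨u, rfl⟩ := Fin.exists_succAbove_eq hw
  rcases eq_or_ne u j with rfl | hu
  · exact Or.inr (Or.inr (Or.inl rfl))
  obtain ⟨v, rfl⟩ := Fin.exists_succAbove_eq hu
  exact Or.inr (Or.inr (Or.inr ⟨v, rfl⟩))

lemma good_ins2 {m : ℕ} {e : Perm (Fin m)} (he : Good e) (i : Fin (m+2)) (j : Fin (m+1)) :
    Good (ins2 e i j) := by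
  intro x
  rcases cover i j x with rfl | rfl | rfl | ⟨v, rfl⟩
  · refine ⟨by rw [ins2_zero]; exact Fin.succ_ne_zero _, ?_⟩
    rw [ins2_zero, ins2_A]
    exact Fin.succ_ne_zero _
  · refine ⟨by rw [ins2_A]; exact (A_ne_B i j).symm, ?_⟩
    rw [ins2_A, ins2_B]
    exact (Fin.succ_ne_zero _).symm
  · refine ⟨by rw [ins2_B]; exact (Fin.succ_ne_zero _).symm, ?_⟩
    rw [ins2_B, ins2_zero]
    exact A_ne_B i j
  · rw [ins2_emb, ins2_emb]
    exact ⟨(emb3 i j).injective.ne (he v).1, (emb3 i j).injective.ne (he v).2⟩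

lemma ins2_cube {m : ℕ} (e : Perm (Fin m)) (i : Fin (m+2)) (j : Fin (m+1)) :
    ins2 e i j (ins2 e i j (ins2 e i j 0)) = 0 := by
  rw [ins2_zero, ins2_A, ins2_B]

lemma ins2_inj {m : ℕ} {e e' : Perm (Fin m)} {i i' : Fin (m+2)} {j j' : Fin (m+1)}
    (h : ins2 e i j = ins2 e' i' j') : e = e' ∧ i = i' ∧ j = j' := by
  have hi : i = i' := by
    have h0 : ins2 e i j 0 = ins2 e' i' j' 0 := by rw [h]
    rw [ins2_zero, ins2_zero] at h0
    exact Fin.succ_injective _ h0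
  subst hi
  have hj : j = j' := by
    have hA : ins2 e i j i.succ = ins2 e' i j' i.succ := by rw [h]
    rw [ins2_A, ins2_A] at hA
    exact Fin.succAbove_right_injective (Fin.succ_injective _ hA)
  subst hj
  refine ⟨Equiv.ext fun v => ?_, rfl, rfl⟩
  have hv : ins2 e i j (emb3 i j v) = ins2 e' i j (emb3 i j v) := by rw [h]
  rw [ins2_emb, ins2_emb] at hv
  exact (emb3 i j).injective hv

/-! ### The recurrence `a (m+3) ≥ (m+2) a (m+2) + (m+2)(m+1) a m` -/

lemma card_rec (m : ℕ) : (m+2) * a (m+2) + (m+2) * ((m+1) * a m) ≤ a (m+3) := by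
  have key : Function.Injective
      (Sum.elim (fun y => ⟨ins1 y.1.1 y.2, good_ins1 y.1.2 y.2⟩)
        (fun y => ⟨ins2 y.1.1 y.2.1 y.2.2, good_ins2 y.1.2 _ _⟩) :
      ({σ : Perm (Fin (m+2)) // Good σ} × Fin (m+2)) ⊕
        ({σ : Perm (Fin m) // Good σ} × (Fin (m+2) × Fin (m+1))) →
        {σ : Perm (Fin (m+3)) // Good σ}) := by
    rintro (⟨⟨e, he⟩, p⟩ | ⟨⟨e, he⟩, i, j⟩) (⟨⟨e', he'⟩, p'⟩ | ⟨⟨e', he'⟩, i', j'⟩) h <;>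
      simp only [Sum.elim_inl, Sum.elim_inr, Subtype.mk.injEq] at h
    · obtain ⟨h1, h2⟩ := ins1_inj h
      subst h1; subst h2; rfl
    · have := ins1_cube he p
      rw [h, ins2_cube] at this
      exact absurd rfl this
    · have := ins1_cube he' p'
      rw [← h, ins2_cube] at this
      exact absurd rfl this
    · obtain ⟨h1, h2, h3⟩ := ins2_inj h
      subst h1; subst h2; subst h3; rfl
  have hc := Nat.card_le_card_of_injective _ key
  have hfin : ∀ k : ℕ, Nat.card (Fin k) = k := fun k => by
    rw [Nat.card_eq_fintype_card, Fintype.card_fin]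
  simp only [Nat.card_sum, Nat.card_prod, hfin] at hc
  show (m+2) * Nat.card {σ : Perm (Fin (m+2)) // Good σ} +
      (m+2) * ((m+1) * Nat.card {σ : Perm (Fin m) // Good σ}) ≤
      Nat.card {σ : Perm (Fin (m+3)) // Good σ}
  linarith

lemma a0 : 1 ≤ a 0 := by
  rw [a, Nat.card_eq_fintype_card]
  exact Fintype.card_pos_iff.mpr ⟨⟨1, fun x => x.elim0⟩⟩

lemma a3 : 2 ≤ a 3 := by
  have h := card_rec 0
  norm_num at h
  have := a0
  omega

lemma a4 : 6 ≤ a 4 := by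
  have h := card_rec 1
  norm_num at h
  have := a3
  omega

lemma a5 : 24 ≤ a 5 := by
  have h := card_rec 2
  norm_num at h
  have := a4
  omega

lemma key : ∀ n, 3 ≤ n → Nat.factorial n ≤ 5 * a n := by
  intro n
  induction n using Nat.strong_induction_on with
  | _ n ih =>
    intro hn
    match n, hn with
    | 3, _ =>
      have := a3
      have e : Nat.factorial 3 = 6 := rfl
      omega
    | 4, _ =>
      have := a4
      have e : Nat.factorial 4 = 24 := rfl
      omega
    | 5, _ =>
      have := a5
      have e : Nat.factorial 5 = 120 := rfl
      omega
    | (k+6), _ =>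
      have h1 := ih (k+5) (by omega) (by omega)
      have h2 := ih (k+3) (by omega) (by omega)
      have hr := card_rec (k+3)
      have e3 : (k+6).factorial = (k+6) * (k+5).factorial := Nat.factorial_succ _
      have e4 : (k+5).factorial = (k+5) * (k+4).factorial := Nat.factorial_succ _
      have e5 : (k+4).factorial = (k+4) * (k+3).factorial := Nat.factorial_succ _
      calc Nat.factorial (k+6)
          = (k+5) * Nat.factorial (k+5) + (k+5) * ((k+4) * Nat.factorial (k+3)) := by
            rw [e3, e4, e5]; ring
        _ ≤ (k+5) * (5 * a (k+5)) + (k+5) * ((k+4) * (5 * a (k+3))) := by gcongr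
        _ = 5 * ((k+5) * a (k+5) + (k+5) * ((k+4) * a (k+3))) := by ring
        _ ≤ 5 * a (k+6) := by gcongr

end Stmt19Aux

/-- For `n ≥ 3`, the number of permutations of `𝔖ₙ` having no orbit
of length 1 or 2 (no fixed point and no 2-cycle) is at least `n!/8`. -/
theorem stmt_19 (n : ℕ) (hn : 3 ≤ n) :
    (n.factorial : ℝ) / 8 ≤
      (Nat.card {σ : Equiv.Perm (Fin n) // ∀ x, σ x ≠ x ∧ σ (σ x) ≠ x} : ℝ) := by
  have h := Stmt19Aux.key n hn
  have ha : Nat.card {σ : Equiv.Perm (Fin n) // ∀ x, σ x ≠ x ∧ σ (σ x) ≠ x} =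
      Stmt19Aux.a n := rfl
  rw [ha]
  have h5 : (n.factorial : ℝ) ≤ 5 * (Stmt19Aux.a n : ℝ) := by exact_mod_cast h
  have hnn : (0 : ℝ) ≤ (Stmt19Aux.a n : ℝ) := Nat.cast_nonneg _
  linarith
end
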